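/- arXiv:1803.04018 — 4 statements merged into one kernel-verified Lean document; each statement's English description precedes it below -/
import Mathlib

section
/- Let (V,φ) be a topological flow and {W_0,…,W_n} a coindependent set of proper closed φ-invariant 𝕂-subspaces of V such that for each i the flow induced by φ on V/W_i has nonzero topological entropy. Set W = W_0 ∩ … ∩ W_n. Then n+1 ≤ ent*(V/W, φ̄) ≤ ent*(V,φ), where φ̄ : V/W → V/W is induced by φ. -/
open scoped ENNReal

/-- A topological `𝕂`-vector space `V` is *linearly compact* if it is Hausdorff, has a
neighbourhood basis at `0` consisting of open `𝕂`-subspaces, and every family of closed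
affine subspaces (cosets of closed `𝕂`-subspaces) with the finite intersection property
has nonempty intersection. -/
def IsLinearlyCompact (𝕂 V : Type*) [Field 𝕂] [AddCommGroup V] [Module 𝕂 V]
    [TopologicalSpace V] : Prop :=
  T2Space V ∧
  (∀ S ∈ nhds (0 : V), ∃ U : Submodule 𝕂 V, IsOpen (U : Set V) ∧ (U : Set V) ⊆ S) ∧
  ∀ (ι : Type) (N : ι → Submodule 𝕂 V) (v : ι → V),
    (∀ i, IsClosed ((N i : Set V))) →
    (∀ F : Finset ι, (⋂ i ∈ F, ((v i + ·) '' (N i : Set V))).Nonempty) →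
    (⋂ i, ((v i + ·) '' (N i : Set V))).Nonempty

/-- A family of proper `𝕂`-subspaces `N i` of `V` is *coindependent* if for every finite
set `F` of indices and every `i ∈ F`, `N i + ⋂_{j ∈ F, j ≠ i} N j = V`. -/
def Coindependent (𝕂 : Type*) {V ι : Type*} [Field 𝕂] [AddCommGroup V] [Module 𝕂 V]
    (N : ι → Submodule 𝕂 V) : Prop :=
  ∀ (F : Finset ι) (i : ι), i ∈ F → N i ⊔ (⨅ j ∈ F, ⨅ _ : j ≠ i, N j) = ⊤

/-- `Cn φ U n = U ∩ φ⁻¹U ∩ ⋯ ∩ φ⁻⁽ⁿ⁻¹⁾U`. -/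
noncomputable def Cn {𝕂 V : Type*} [Field 𝕂] [AddCommGroup V] [Module 𝕂 V]
    (φ : V →ₗ[𝕂] V) (U : Submodule 𝕂 V) (n : ℕ) : Submodule 𝕂 V :=
  ⨅ k ∈ Finset.range n, Submodule.comap (φ ^ k) U

/-- The `φ`-cotrajectory `C(φ,U) = ⋂_{n ∈ ℕ} φ⁻ⁿU = ⋂_{n ≥ 1} C_n(φ,U)`. -/
noncomputable def Cotraj {𝕂 V : Type*} [Field 𝕂] [AddCommGroup V] [Module 𝕂 V]
    (φ : V →ₗ[𝕂] V) (U : Submodule 𝕂 V) : Submodule 𝕂 V :=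
  ⨅ k : ℕ, Submodule.comap (φ ^ k) U

/-- `H*(φ,U) = lim_{n→∞} (1/n)·dim_𝕂 (U / C_n(φ,U))`, realized as a limsup in `ℝ≥0∞`
(the limit exists, so it coincides with the limsup). -/
noncomputable def HStar {𝕂 V : Type*} [Field 𝕂] [AddCommGroup V] [Module 𝕂 V]
    (φ : V →ₗ[𝕂] V) (U : Submodule 𝕂 V) : ℝ≥0∞ :=
  Filter.atTop.limsup fun n : ℕ =>
    (((Module.rank 𝕂 (↥U ⧸ Submodule.comap U.subtype (Cn φ U n))).toENat : ℕ∞) : ℝ≥0∞) /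
      (n : ℝ≥0∞)

/-- The topological entropy `ent*(V,φ) = sup_U H*(φ,U)`, the supremum ranging over all
open `𝕂`-subspaces `U` of `V`. -/
noncomputable def entStar (𝕂 V : Type*) [Field 𝕂] [AddCommGroup V] [Module 𝕂 V]
    [TopologicalSpace V] (φ : V →ₗ[𝕂] V) : ℝ≥0∞ :=
  ⨆ (U : Submodule 𝕂 V) (_ : IsOpen (U : Set V)), HStar φ U

section Alg
variable {𝕂 M N : Type*} [Field 𝕂] [AddCommGroup M] [Module 𝕂 M]
  [AddCommGroup N] [Module 𝕂 N]

lemma mem_cn {φ : M →ₗ[𝕂] M} {U : Submodule 𝕂 M} {n : ℕ} {x : M} :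
    x ∈ Cn φ U n ↔ ∀ k < n, (φ ^ k) x ∈ U := by
  simp [Cn]

lemma cn_succ_left (φ : M →ₗ[𝕂] M) (U : Submodule 𝕂 M) (n : ℕ) :
    Cn φ U (n + 1) = U ⊓ (Cn φ U n).comap φ := by
  ext x
  simp only [mem_cn, Submodule.mem_inf, Submodule.mem_comap]
  constructor
  · intro h
    refine ⟨by simpa using h 0 (Nat.succ_pos _), fun k hk => ?_⟩
    have := h (k + 1) (by omega)
    rwa [pow_succ, Module.End.mul_apply] at this
  · rintro ⟨h0, h⟩ k hk
    rcases k with _ | k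
    · simpa using h0
    · have := h k (by omega)
      rwa [pow_succ, Module.End.mul_apply]

lemma cn_anti (φ : M →ₗ[𝕂] M) (U : Submodule 𝕂 M) {m n : ℕ} (h : m ≤ n) :
    Cn φ U n ≤ Cn φ U m := fun x hx => mem_cn.2 fun k hk => mem_cn.1 hx k (lt_of_lt_of_le hk h)

lemma cn_le (φ : M →ₗ[𝕂] M) (U : Submodule 𝕂 M) {n : ℕ} (h : 1 ≤ n) :
    Cn φ U n ≤ U := fun x hx => by simpa using mem_cn.1 hx 0 h

lemma cn_mono_U (φ : M →ₗ[𝕂] M) {U U' : Submodule 𝕂 M} (h : U ≤ U') (n : ℕ) :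
    Cn φ U n ≤ Cn φ U' n := fun x hx => mem_cn.2 fun k hk => h (mem_cn.1 hx k hk)

lemma cn_stab {φ : M →ₗ[𝕂] M} {U : Submodule 𝕂 M} {m : ℕ}
    (h : Cn φ U (m + 1) = Cn φ U m) : ∀ k, Cn φ U (m + k) = Cn φ U m := by
  intro k
  induction k with
  | zero => rfl
  | succ k ih =>
    have : Cn φ U (m + k + 1) = U ⊓ (Cn φ U (m + k)).comap φ := cn_succ_left ..
    rw [show m + (k+1) = m + k + 1 from rfl, this, ih, ← cn_succ_left, h]

lemma pow_comm_of_comm {π : M →ₗ[𝕂] N} {φM : M →ₗ[𝕂] M} {φN : N →ₗ[𝕂] N}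
    (comm : φN ∘ₗ π = π ∘ₗ φM) (k : ℕ) : (φN ^ k) ∘ₗ π = π ∘ₗ (φM ^ k) := by
  induction k with
  | zero => ext x; simp
  | succ k ih =>
    rw [pow_succ, pow_succ]
    ext x
    simp only [LinearMap.coe_comp, Function.comp_apply, Module.End.mul_apply]
    have h1 : φN (π x) = π (φM x) := LinearMap.congr_fun comm x
    rw [h1]
    exact LinearMap.congr_fun ih (φM x)

lemma cn_comap {π : M →ₗ[𝕂] N} {φM : M →ₗ[𝕂] M} {φN : N →ₗ[𝕂] N}
    (comm : φN ∘ₗ π = π ∘ₗ φM) (Ub : Submodule 𝕂 N) (n : ℕ) :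
    Submodule.comap π (Cn φN Ub n) = Cn φM (Submodule.comap π Ub) n := by
  ext x
  simp only [Submodule.mem_comap, mem_cn]
  refine forall₂_congr fun k hk => ?_
  rw [show (φN ^ k) (π x) = π ((φM ^ k) x) from LinearMap.congr_fun (pow_comm_of_comm comm k) x]

lemma rank_quot_mono {X : Type*} [AddCommGroup X] [Module 𝕂 X] {K K' : Submodule 𝕂 X}
    (h : K ≤ K') : Module.rank 𝕂 (X ⧸ K') ≤ Module.rank 𝕂 (X ⧸ K) := by
  apply LinearMap.rank_le_of_surjective (Submodule.mapQ K K' LinearMap.id h)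
  intro y
  obtain ⟨x, rfl⟩ := Submodule.Quotient.mk_surjective _ y
  exact ⟨Submodule.Quotient.mk x, by simp [Submodule.mapQ_apply]⟩

lemma eq_of_rank_quot_eq {X : Type*} [AddCommGroup X] [Module 𝕂 X] {K K' : Submodule 𝕂 X}
    (h : K ≤ K') {m : ℕ} (hK : Module.rank 𝕂 (X ⧸ K) = m) (hK' : Module.rank 𝕂 (X ⧸ K') = m) :
    K' = K := by
  have e := Submodule.quotientQuotientEquivQuotient K K' h
  have hadd := Submodule.rank_quotient_add_rank (Submodule.map K.mkQ K')
  rw [e.rank_eq, hK, hK'] at hadd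
  -- hadd : ↑m + rank (map K.mkQ K') = ↑m
  have hle : Module.rank 𝕂 (Submodule.map K.mkQ K') ≤ (m : Cardinal) := by
    rw [← hadd]; exact le_add_self
  obtain ⟨r, hr⟩ := Cardinal.lt_aleph0.1 (lt_of_le_of_lt hle (Cardinal.nat_lt_aleph0 m))
  rw [hr] at hadd
  have : m + r = m := by exact_mod_cast hadd
  have hr0 : r = 0 := by omega
  rw [hr0] at hr
  have hbot : Submodule.map K.mkQ K' = ⊥ := Submodule.rank_eq_zero.1 (by exact_mod_cast hr)
  refine le_antisymm (fun x hx => ?_) h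
  have : K.mkQ x ∈ Submodule.map K.mkQ K' := Submodule.mem_map_of_mem hx
  rw [hbot, Submodule.mem_bot, Submodule.mkQ_apply, Submodule.Quotient.mk_eq_zero] at this
  exact this

end Alg

section L1
variable {𝕂 M : Type*} [Field 𝕂] [AddCommGroup M] [Module 𝕂 M]

lemma tendsto_const_div_nat (c : ℝ≥0∞) (hc : c ≠ ⊤) :
    Filter.Tendsto (fun n : ℕ => c / (n : ℝ≥0∞)) Filter.atTop (nhds 0) := by
  have := ENNReal.Tendsto.const_mul (f := Filter.atTop)
    ENNReal.tendsto_inv_nat_nhds_zero (Or.inr hc) (a := c)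
  simpa [div_eq_mul_inv] using this

lemma rank_cn_lower {φ : M →ₗ[𝕂] M} {U : Submodule 𝕂 M} (h : HStar φ U ≠ 0) (m : ℕ) :
    (m : ℕ∞) ≤ (Module.rank 𝕂 (↥U ⧸ Submodule.comap U.subtype (Cn φ U (m + 1)))).toENat := by
  induction m with
  | zero => exact zero_le
  | succ m ih =>
    by_contra hc
    -- notation
    set K : ℕ → Submodule 𝕂 ↥U := fun j => Submodule.comap U.subtype (Cn φ U j) with hK
    have hmono : (Module.rank 𝕂 (↥U ⧸ K (m+1))).toENat ≤ (Module.rank 𝕂 (↥U ⧸ K (m+2))).toENat := by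
      apply OrderHomClass.mono Cardinal.toENat
      exact rank_quot_mono (Submodule.comap_mono (cn_anti φ U (by omega)))
    have hlt : (Module.rank 𝕂 (↥U ⧸ K (m+2))).toENat < ((m+1 : ℕ) : ℕ∞) := lt_of_not_ge hc
    have hle2 : (Module.rank 𝕂 (↥U ⧸ K (m+2))).toENat ≤ (m : ℕ∞) := by
      rw [show ((m+1 : ℕ) : ℕ∞) = (m : ℕ∞) + 1 by push_cast; ring] at hlt
      exact (ENat.lt_add_one_iff (by simp)).1 hlt
    have he1 : (Module.rank 𝕂 (↥U ⧸ K (m+1))).toENat = (m : ℕ∞) :=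
      le_antisymm (le_trans hmono hle2) ih
    have he2 : (Module.rank 𝕂 (↥U ⧸ K (m+2))).toENat = (m : ℕ∞) :=
      le_antisymm hle2 (le_trans ih hmono)
    have hr1 : Module.rank 𝕂 (↥U ⧸ K (m+1)) = (m : Cardinal) := Cardinal.toENat_eq_nat.1 he1
    have hr2 : Module.rank 𝕂 (↥U ⧸ K (m+2)) = (m : Cardinal) := Cardinal.toENat_eq_nat.1 he2
    have hKeq : K (m+1) = K (m+2) :=
      eq_of_rank_quot_eq (Submodule.comap_mono (cn_anti φ U (by omega))) hr2 hr1
    -- lift to equality of Cn's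
    have hCeq : Cn φ U (m+2) = Cn φ U (m+1) := by
      have h1 : U ⊓ Cn φ U (m+2) = U ⊓ Cn φ U (m+1) := by
        rw [← Submodule.map_comap_subtype, ← Submodule.map_comap_subtype]
        exact congrArg (Submodule.map U.subtype) hKeq.symm
      rwa [inf_eq_right.2 (cn_le φ U (by omega)), inf_eq_right.2 (cn_le φ U (by omega))] at h1
    have hstab := cn_stab hCeq
    -- HStar = 0
    apply h
    have hev : ∀ᶠ n : ℕ in Filter.atTop,
        (((Module.rank 𝕂 (↥U ⧸ Submodule.comap U.subtype (Cn φ U n))).toENat : ℕ∞) : ℝ≥0∞) /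
          (n : ℝ≥0∞) = ((m : ℝ≥0∞)) / (n : ℝ≥0∞) := by
      filter_upwards [Filter.eventually_ge_atTop (m+2)] with n hn
      have : Cn φ U n = Cn φ U (m+1+1) := by
        obtain ⟨k, rfl⟩ := Nat.exists_eq_add_of_le hn
        have := hstab (1 + k)
        rw [show m + 2 + k = m + 1 + (1 + k) by ring, this, ← hstab 1]
      rw [this]
      congr 1
      rw [he2]
      simp
    rw [HStar, Filter.limsup_congr hev]
    exact (tendsto_const_div_nat (m : ℝ≥0∞) (by simp)).limsup_eq

end L1

section UB
universe uv
variable {𝕂 : Type*} {M N : Type uv} [Field 𝕂] [AddCommGroup M] [Module 𝕂 M]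
  [AddCommGroup N] [Module 𝕂 N]

lemma rank_cn_comap_le {π : M →ₗ[𝕂] N} (hπ : Function.Surjective π)
    {φM : M →ₗ[𝕂] M} {φN : N →ₗ[𝕂] N} (comm : φN ∘ₗ π = π ∘ₗ φM)
    (Ub : Submodule 𝕂 N) (m : ℕ) :
    Module.rank 𝕂 (↥Ub ⧸ Submodule.comap Ub.subtype (Cn φN Ub m)) ≤
      Module.rank 𝕂 (↥(Ub.comap π) ⧸
        Submodule.comap (Ub.comap π).subtype (Cn φM (Ub.comap π) m)) := by
  set U : Submodule 𝕂 M := Ub.comap π with hU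
  have hres : ∀ x ∈ U, π x ∈ Ub := fun x hx => hx
  have hCn : Submodule.comap π (Cn φN Ub m) = Cn φM U m := cn_comap comm Ub m
  set g : ↥U →ₗ[𝕂] ↥Ub ⧸ Submodule.comap Ub.subtype (Cn φN Ub m) :=
    (Submodule.comap Ub.subtype (Cn φN Ub m)).mkQ ∘ₗ π.restrict hres with hg
  have hker : Submodule.comap U.subtype (Cn φM U m) ≤ LinearMap.ker g := by
    intro x hx
    have hmem : π (x : M) ∈ Cn φN Ub m := by
      rw [← hCn] at hx; exact hx
    simp only [hg, LinearMap.mem_ker, LinearMap.comp_apply, Submodule.mkQ_apply,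
      Submodule.Quotient.mk_eq_zero]
    exact hmem
  set G := (Submodule.comap U.subtype (Cn φM U m)).liftQ g hker with hG
  have hsurj : Function.Surjective G := by
    intro t
    obtain ⟨u, rfl⟩ := Submodule.Quotient.mk_surjective _ t
    obtain ⟨x, hx⟩ := hπ (u : N)
    have hxU : x ∈ U := by rw [hU]; simp only [Submodule.mem_comap, hx]; exact u.2
    refine ⟨Submodule.Quotient.mk ⟨x, hxU⟩, ?_⟩
    rw [hG]
    erw [Submodule.liftQ_apply]
    simp only [hg, LinearMap.comp_apply, Submodule.mkQ_apply]
    congr 1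
    exact Subtype.ext hx
  exact LinearMap.rank_le_of_surjective G hsurj

lemma hstar_comap_le {π : M →ₗ[𝕂] N} (hπ : Function.Surjective π)
    {φM : M →ₗ[𝕂] M} {φN : N →ₗ[𝕂] N} (comm : φN ∘ₗ π = π ∘ₗ φM)
    (Ub : Submodule 𝕂 N) : HStar φN Ub ≤ HStar φM (Ub.comap π) := by
  refine Filter.limsup_le_limsup (Filter.Eventually.of_forall fun n => ?_) ?_ ?_
  rotate_left
  · isBoundedDefault
  · isBoundedDefault
  apply ENNReal.div_le_div_right
  rw [ENat.toENNReal_le]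
  exact OrderHomClass.mono Cardinal.toENat (rank_cn_comap_le hπ comm Ub n)

end UB

section LS
open scoped NNReal

lemma tendsto_nat_div_succ :
    Filter.Tendsto (fun m : ℕ => (m : ℝ≥0∞) / ((m : ℝ≥0∞) + 1)) Filter.atTop (nhds 1) := by
  have key : ∀ m : ℕ, (m : ℝ≥0∞) / ((m : ℝ≥0∞) + 1)
      = (((m : ℝ≥0) / ((m : ℝ≥0) + 1) : ℝ≥0) : ℝ≥0∞) := by
    intro m
    rw [ENNReal.coe_div (by positivity)]
    push_cast
    rfl
  simp only [key]
  rw [show (1 : ℝ≥0∞) = ((1 : ℝ≥0) : ℝ≥0∞) by norm_num, ENNReal.tendsto_coe]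
  rw [← NNReal.tendsto_coe]
  have : ∀ m : ℕ, (((m : ℝ≥0) / ((m : ℝ≥0) + 1) : ℝ≥0) : ℝ) = (m : ℝ) / ((m : ℝ) + 1) := by
    intro m; push_cast; ring
  simp only [this]
  simpa using tendsto_natCast_div_add_atTop (1 : ℝ)

lemma le_limsup_div (c : ℕ) (a : ℕ → ℝ≥0∞) (h : ∀ m : ℕ, ((c * m : ℕ) : ℝ≥0∞) ≤ a (m + 1)) :
    (c : ℝ≥0∞) ≤ Filter.atTop.limsup (fun n : ℕ => a n / (n : ℝ≥0∞)) := by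
  rw [← Filter.limsup_nat_add (fun n : ℕ => a n / (n : ℝ≥0∞)) 1]
  have hg : Filter.Tendsto (fun m : ℕ => (c : ℝ≥0∞) * ((m : ℝ≥0∞) / ((m : ℝ≥0∞) + 1)))
      Filter.atTop (nhds (c : ℝ≥0∞)) := by
    have := ENNReal.Tendsto.const_mul (a := (c : ℝ≥0∞)) tendsto_nat_div_succ
      (Or.inr (by simp))
    simpa using this
  have hle : ∀ m : ℕ, (c : ℝ≥0∞) * ((m : ℝ≥0∞) / ((m : ℝ≥0∞) + 1)) ≤
      a (m + 1) / ((m + 1 : ℕ) : ℝ≥0∞) := by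
    intro m
    rw [← mul_div_assoc]
    have : ((m + 1 : ℕ) : ℝ≥0∞) = (m : ℝ≥0∞) + 1 := by push_cast; ring
    rw [this]
    apply ENNReal.div_le_div_right
    calc (c : ℝ≥0∞) * (m : ℝ≥0∞) = ((c * m : ℕ) : ℝ≥0∞) := by push_cast; ring
    _ ≤ a (m + 1) := h m
  have h1 : (c : ℝ≥0∞) = Filter.liminf (fun m : ℕ => (c : ℝ≥0∞) * ((m : ℝ≥0∞) / ((m : ℝ≥0∞) + 1))) Filter.atTop := hg.liminf_eq.symm
  have h2 : Filter.liminf (fun m : ℕ => (c : ℝ≥0∞) * ((m : ℝ≥0∞) / ((m : ℝ≥0∞) + 1))) Filter.atTop ≤ Filter.liminf (fun m : ℕ => a (m + 1) / ((m + 1 : ℕ) : ℝ≥0∞)) Filter.atTop :=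
    Filter.liminf_le_liminf (Filter.Eventually.of_forall hle)
  have h3 : Filter.liminf (fun m : ℕ => a (m + 1) / ((m + 1 : ℕ) : ℝ≥0∞)) Filter.atTop ≤ Filter.limsup (fun m : ℕ => a (m + 1) / ((m + 1 : ℕ) : ℝ≥0∞)) Filter.atTop :=
    Filter.liminf_le_limsup
  exact h1.le.trans (h2.trans h3)

end LS

section CRT
variable {𝕂 V : Type*} [Field 𝕂] [AddCommGroup V] [Module 𝕂 V]

lemma crt {n : ℕ} {W : Fin (n + 1) → Submodule 𝕂 V} (hcoind : Coindependent 𝕂 W)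
    (u : ∀ i, V ⧸ W i) : ∃ v : V, ∀ i, (Submodule.Quotient.mk v : V ⧸ W i) = u i := by
  have hrep : ∀ i, ∃ x : V, (Submodule.Quotient.mk x : V ⧸ W i) = u i :=
    fun i => Submodule.Quotient.mk_surjective _ (u i)
  choose x hx using hrep
  have hdecomp : ∀ i, ∃ w ∈ W i, ∃ c ∈ (⨅ j ∈ (Finset.univ : Finset (Fin (n+1))),
      ⨅ _ : j ≠ i, W j), w + c = x i := by
    intro i
    have := hcoind Finset.univ i (Finset.mem_univ i)
    have hx' : x i ∈ W i ⊔ (⨅ j ∈ (Finset.univ : Finset (Fin (n+1))), ⨅ _ : j ≠ i, W j) := by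
      rw [this]; trivial
    exact Submodule.mem_sup.1 hx'
  choose w hw c hc hwc using hdecomp
  have hcmem : ∀ i j, j ≠ i → c i ∈ W j := by
    intro i j hji
    have := hc i
    simp only [Submodule.mem_iInf, Finset.mem_univ] at this
    exact this j trivial hji
  refine ⟨∑ j, c j, fun i => ?_⟩
  rw [← hx i, Submodule.Quotient.eq]
  have : (∑ j, c j) - x i = (∑ j ∈ Finset.univ.erase i, c j) - w i := by
    rw [← hwc i]
    rw [← Finset.add_sum_erase _ c (Finset.mem_univ i)]
    abel
  rw [this]
  exact sub_mem (Submodule.sum_mem _ fun j hj => hcmem j i (Finset.ne_of_mem_erase hj).symm)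
    (hw i)

end CRT

section Prod
universe uv
variable {𝕂 : Type*} [Field 𝕂] {n : ℕ} {Q : Type uv} [AddCommGroup Q] [Module 𝕂 Q]
  {Vi : Fin (n + 1) → Type uv} [∀ i, AddCommGroup (Vi i)] [∀ i, Module 𝕂 (Vi i)]

set_option maxHeartbeats 800000 in
lemma rank_pi_le (p : ∀ i, Q →ₗ[𝕂] Vi i) (ψ : Q →ₗ[𝕂] Q) (φi : ∀ i, Vi i →ₗ[𝕂] Vi i)
    (comm : ∀ i, φi i ∘ₗ p i = p i ∘ₗ ψ) (U : ∀ i, Submodule 𝕂 (Vi i))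
    (hsurj : ∀ u : ∀ i, Vi i, ∃ q : Q, ∀ i, p i q = u i) (m : ℕ)
    (Ub : Submodule 𝕂 Q) (hle : ∀ i, Ub ≤ Submodule.comap (p i) (U i))
    (hmem : ∀ q : Q, (∀ i, p i q ∈ U i) → q ∈ Ub) :
    Cardinal.sum (fun i =>
        Module.rank 𝕂 (↥(U i) ⧸ Submodule.comap (U i).subtype (Cn (φi i) (U i) m))) ≤
      Module.rank 𝕂 (↥Ub ⧸ Submodule.comap Ub.subtype (Cn ψ Ub m)) := by
  have hres : ∀ i, ∀ x ∈ Ub, p i x ∈ U i := fun i x hx => hle i hx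
  set g : ∀ i, ↥Ub →ₗ[𝕂] (↥(U i) ⧸ Submodule.comap (U i).subtype (Cn (φi i) (U i) m)) :=
    fun i => (Submodule.comap (U i).subtype (Cn (φi i) (U i) m)).mkQ ∘ₗ
      (p i).restrict (hres i) with hg
  set G := LinearMap.pi g with hGdef
  have hker : Submodule.comap Ub.subtype (Cn ψ Ub m) ≤ LinearMap.ker G := by
    intro x hx
    have hx' : (x : Q) ∈ Cn ψ Ub m := hx
    rw [LinearMap.mem_ker]
    funext i
    have h1 : (x : Q) ∈ Submodule.comap (p i) (Cn (φi i) (U i) m) := by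
      rw [cn_comap (comm i)]
      exact cn_mono_U ψ (hle i) m hx'
    show g i x = 0
    simp only [hg, LinearMap.comp_apply, Submodule.mkQ_apply, Submodule.Quotient.mk_eq_zero]
    exact h1
  set G' := (Submodule.comap Ub.subtype (Cn ψ Ub m)).liftQ G hker with hG'
  have hsurjG : Function.Surjective G' := by
    intro t
    have hrep : ∀ i, ∃ x : ↥(U i), Submodule.Quotient.mk x = t i :=
      fun i => Submodule.Quotient.mk_surjective _ (t i)
    choose xt hxt using hrep
    obtain ⟨q, hq⟩ := hsurj fun i => (xt i : Vi i)
    have hqUb : q ∈ Ub := hmem q fun i => by rw [hq i]; exact (xt i).2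
    refine ⟨Submodule.Quotient.mk ⟨q, hqUb⟩, ?_⟩
    rw [hG']
    erw [Submodule.liftQ_apply]
    funext i
    show g i ⟨q, hqUb⟩ = t i
    simp only [hg, LinearMap.comp_apply, Submodule.mkQ_apply]
    rw [← hxt i]
    congr 1
    exact Subtype.ext (hq i)
  calc Cardinal.sum (fun i =>
        Module.rank 𝕂 (↥(U i) ⧸ Submodule.comap (U i).subtype (Cn (φi i) (U i) m)))
      = Module.rank 𝕂 (∀ i, (↥(U i) ⧸ Submodule.comap (U i).subtype (Cn (φi i) (U i) m))) :=
        rank_pi.symm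
    _ ≤ _ := LinearMap.rank_le_of_surjective G' hsurjG

end Prod

set_option maxHeartbeats 1000000 in
/-- Let `(V,φ)` be a topological flow and `W 0, …, W n` a coindependent
set of proper closed `φ`-invariant `𝕂`-subspaces of `V` such that the flow induced by `φ`
on each `V / W i` has nonzero topological entropy.  With `W = W 0 ∩ … ∩ W n` and
`φ̄ : V/W → V/W` the map induced by `φ`, one has `n+1 ≤ ent*(V/W, φ̄) ≤ ent*(V,φ)`. -/
theorem stmt_1 {𝕂 V : Type*} [Field 𝕂] [TopologicalSpace 𝕂] [DiscreteTopology 𝕂]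
    [AddCommGroup V] [Module 𝕂 V] [TopologicalSpace V] [IsTopologicalAddGroup V]
    [ContinuousSMul 𝕂 V]
    (hV : IsLinearlyCompact 𝕂 V) (φ : V →ₗ[𝕂] V) (hφ : Continuous φ)
    (n : ℕ) (W : Fin (n + 1) → Submodule 𝕂 V)
    (hclosed : ∀ i, IsClosed ((W i : Set V)))
    (hproper : ∀ i, W i ≠ ⊤)
    (hinv : ∀ i, W i ≤ (W i).comap φ)
    (hcoind : Coindependent 𝕂 W)
    (hent : ∀ i, entStar 𝕂 (V ⧸ W i) (Submodule.mapQ (W i) (W i) φ (hinv i)) ≠ 0) :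
    ∀ ψ : (V ⧸ ⨅ i, W i) →ₗ[𝕂] (V ⧸ ⨅ i, W i),
      (∀ v : V, ψ (Submodule.Quotient.mk v) = Submodule.Quotient.mk (φ v)) →
      ((n : ℝ≥0∞) + 1 ≤ entStar 𝕂 (V ⧸ ⨅ i, W i) ψ ∧
        entStar 𝕂 (V ⧸ ⨅ i, W i) ψ ≤ entStar 𝕂 V φ) := by
  intro ψ hψ
  constructor
  · -- lower bound
    have hexU : ∀ i, ∃ U : Submodule 𝕂 (V ⧸ W i), IsOpen (U : Set (V ⧸ W i)) ∧
        HStar (Submodule.mapQ (W i) (W i) φ (hinv i)) U ≠ 0 := by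
      intro i
      by_contra hno
      push_neg at hno
      apply hent i
      refine le_antisymm ?_ zero_le
      unfold entStar
      exact iSup_le fun U => iSup_le fun hU => (hno U hU).le
    choose U hUopen hU0 using hexU
    have hple : ∀ i, (⨅ j, W j) ≤ Submodule.comap (LinearMap.id : V →ₗ[𝕂] V) (W i) :=
      fun i => by simpa using iInf_le W i
    set p : ∀ i, (V ⧸ ⨅ j, W j) →ₗ[𝕂] V ⧸ W i :=
      fun i => Submodule.mapQ (⨅ j, W j) (W i) LinearMap.id (hple i) with hp
    have hpmk : ∀ (i) (v : V), p i (Submodule.Quotient.mk v) = Submodule.Quotient.mk v := by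
      intro i v
      simp [hp, Submodule.mapQ_apply]
    have hcomm : ∀ i, (Submodule.mapQ (W i) (W i) φ (hinv i)) ∘ₗ p i = p i ∘ₗ ψ := by
      intro i
      apply Submodule.linearMap_qext
      ext v
      simp only [LinearMap.comp_apply, Submodule.mkQ_apply]
      rw [hψ v, hpmk, hpmk, Submodule.mapQ_apply]
    have hsurjQ : ∀ u : ∀ i, V ⧸ W i, ∃ q : V ⧸ ⨅ j, W j, ∀ i, p i q = u i := by
      intro u
      obtain ⟨v, hv⟩ := crt hcoind u
      exact ⟨Submodule.Quotient.mk v, fun i => by rw [hpmk]; exact hv i⟩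
    set Ub : Submodule 𝕂 (V ⧸ ⨅ j, W j) := ⨅ i, Submodule.comap (p i) (U i) with hUb
    have hle : ∀ i, Ub ≤ Submodule.comap (p i) (U i) := fun i => by
      rw [hUb]; exact iInf_le _ i
    have hmem : ∀ q, (∀ i, p i q ∈ U i) → q ∈ Ub := fun q hq => by
      rw [hUb]; exact (Submodule.mem_iInf _).2 hq
    have hUbopen : IsOpen (Ub : Set (V ⧸ ⨅ j, W j)) := by
      rw [hUb, Submodule.coe_iInf]
      apply isOpen_iInter_of_finite
      intro i
      have hiff : ∀ s : Set (V ⧸ ⨅ j, W j), IsOpen s ↔ IsOpen ((⨅ j, W j).mkQ ⁻¹' s) :=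
        fun s => isOpen_coinduced
      rw [hiff]
      have hpre : ((⨅ j, W j).mkQ ⁻¹' ((Submodule.comap (p i) (U i) : Submodule 𝕂 _) : Set _))
          = (W i).mkQ ⁻¹' (U i : Set (V ⧸ W i)) := by
        ext v
        simp only [Set.mem_preimage, Submodule.mkQ_apply, SetLike.mem_coe, Submodule.mem_comap]
        rw [hpmk]
      rw [hpre]
      exact (hUopen i).preimage continuous_quotient_mk'
    have hrank : ∀ (i) (m : ℕ), (m : ℕ∞) ≤ (Module.rank 𝕂 (↥(U i) ⧸
        Submodule.comap (U i).subtype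
          (Cn (Submodule.mapQ (W i) (W i) φ (hinv i)) (U i) (m+1)))).toENat :=
      fun i => rank_cn_lower (hU0 i)
    have key : ∀ m : ℕ, (((n+1)*m : ℕ) : ℕ∞) ≤
        (Module.rank 𝕂 (↥Ub ⧸ Submodule.comap Ub.subtype (Cn ψ Ub (m+1)))).toENat := by
      intro m
      rw [Cardinal.natCast_le_toENat_iff]
      have h1 : ∀ i, ((m : Cardinal) ≤ Module.rank 𝕂 (↥(U i) ⧸ Submodule.comap (U i).subtype
          (Cn (Submodule.mapQ (W i) (W i) φ (hinv i)) (U i) (m+1)))) :=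
        fun i => Cardinal.natCast_le_toENat_iff.1 (hrank i m)
      have h2 : (((n+1)*m : ℕ) : Cardinal) ≤
          Cardinal.sum (fun _ : Fin (n+1) => (m : Cardinal)) := by
        rw [Cardinal.sum_const, Cardinal.mk_fin]
        simp only [Cardinal.lift_natCast]
        push_cast
        rfl
      exact h2.trans ((Cardinal.sum_le_sum _ _ h1).trans
        (rank_pi_le p ψ _ hcomm U hsurjQ (m+1) Ub hle hmem))
    have hfinal : ((n+1 : ℕ) : ℝ≥0∞) ≤ HStar ψ Ub := by
      unfold HStar
      apply le_limsup_div (n+1)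
      intro m
      have h' := ENat.toENNReal_le.2 (key m)
      rwa [ENat.toENNReal_coe] at h'
    have hcast : ((n : ℝ≥0∞) + 1) = ((n+1 : ℕ) : ℝ≥0∞) := by push_cast; ring
    rw [hcast]
    refine hfinal.trans ?_
    unfold entStar
    exact le_iSup₂_of_le Ub hUbopen le_rfl
  · -- upper bound
    have comm_main : ψ ∘ₗ (⨅ i, W i).mkQ = (⨅ i, W i).mkQ ∘ₗ φ := by
      ext v
      simp only [LinearMap.comp_apply, Submodule.mkQ_apply]
      exact hψ v
    unfold entStar
    refine iSup_le fun Ub2 => iSup_le fun hUb2 => ?_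
    have h1 : HStar ψ Ub2 ≤ HStar φ (Ub2.comap (⨅ i, W i).mkQ) :=
      hstar_comap_le (Submodule.mkQ_surjective _) comm_main Ub2
    have hopen2 : IsOpen ((Ub2.comap (⨅ i, W i).mkQ : Submodule 𝕂 V) : Set V) := by
      have hh : ((Ub2.comap (⨅ i, W i).mkQ : Submodule 𝕂 V) : Set V)
          = (⨅ i, W i).mkQ ⁻¹' (Ub2 : Set _) := rfl
      rw [hh]
      exact hUb2.preimage continuous_quotient_mk'
    exact h1.trans (le_iSup₂_of_le _ hopen2 le_rfl)
end

section
/- Let (V,φ) be a topological flow and U an open 𝕂-subspace of V such that the φ-cotrajectory C(φ,U) is cocyclic and non-stationary. Then: (1) the closed subspace φ⁻ⁿU has codimension 1 in V for every n ∈ ℕ; (2) the family {φ⁻ⁿU : n ∈ ℕ} is coindependent in V; (3) H*(φ,U) = 1. -/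
open scoped ENNReal

/-!
Write `U = ker f` for a linear functional `f`, so that `φ⁻ᵏU = ker (f ∘ φᵏ)` and
`C_n(φ,U) = ⋂_{k<n} ker (f ∘ φᵏ)`. Since `C_{n+1} = U ∩ φ⁻¹ C_n`, a single equality
`C_{n+1} = C_n` makes the sequence stationary and the cotrajectory equal to the open `C_n`.
Hence no `f ∘ φⁿ` lies in the span of the earlier `f ∘ φᵏ` (it would vanish on `C_n`,
forcing `C_{n+1} = C_n`), i.e. the functionals `f ∘ φᵏ` are linearly independent. Kernels of independent
functionals are coindependent hyperplanes, `⋂_{k<n} ker (f ∘ φᵏ)` has codimension `n`, so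
`dim U/C_n = n - 1` and `H*(φ,U) = lim (n - 1)/n = 1`.
-/

open Module Submodule LinearMap

section Codimension

variable {K V : Type*} [Field K] [AddCommGroup V] [Module K V]

theorem Module.Dual.exists_ker_eq_of_finrank_quotient_eq_one {U : Submodule K V}
    (hU : finrank K (V ⧸ U) = 1) : ∃ f : Dual K V, ker f = U := by
  have := Module.finite_of_finrank_eq_succ hU
  let e : (V ⧸ U) ≃ₗ[K] K := LinearEquiv.ofFinrankEq _ _ (hU.trans (finrank_self K).symm)
  exact ⟨e.toLinearMap ∘ₗ U.mkQ, by rw [LinearEquiv.ker_comp, ker_mkQ]⟩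

theorem Module.Dual.finrank_quotient_ker {f : Dual K V} (hf : f ≠ 0) :
    finrank K (V ⧸ ker f) = 1 :=
  (f.quotKerEquivOfSurjective (LinearMap.surjective hf)).finrank_eq.trans (finrank_self K)

theorem Subspace.finrank_quotient_dualCoannihilator (W : Subspace K (Dual K V))
    [FiniteDimensional K W] : finrank K (V ⧸ W.dualCoannihilator) = finrank K W :=
  letI : AddCommGroup W := inferInstance
  (LinearEquiv.ofBijective _ W.quotDualCoannihilatorToDual_bijective).finrank_eq.trans
    Subspace.dual_finrank_eq

theorem Submodule.dualCoannihilator_span_image {ι : Type*} (g : ι → Dual K V) (s : Set ι) :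
    (span K (g '' s)).dualCoannihilator = ⨅ i ∈ s, ker (g i) := by
  refine SetLike.ext' ?_
  rw [coe_dualCoannihilator_span]
  ext x
  simp

theorem LinearIndependent.rank_quotient_biInf_ker {ι : Type*} {g : ι → Dual K V}
    (hg : LinearIndependent K g) (s : Finset ι) :
    Module.rank K (V ⧸ ⨅ i ∈ s, ker (g i)) = s.card := by
  set W := span K (Set.range (g ∘ ((↑) : s → ι)))
  have hW : (⨅ i ∈ s, ker (g i)) = W.dualCoannihilator := by
    simp only [W, Set.range_comp, Subtype.range_coe_subtype, dualCoannihilator_span_image,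
      Set.mem_ofPred_eq]
  have : FiniteDimensional K W := FiniteDimensional.span_of_finite K (Set.finite_range _)
  have := Subspace.finiteDimensional_quot_dualCoannihilator_iff.mpr this
  rw [hW, ← finrank_eq_rank, Subspace.finrank_quotient_dualCoannihilator,
    finrank_span_eq_card (hg.comp _ Subtype.val_injective), Fintype.card_coe]

theorem LinearIndependent.coindependent_ker {ι : Type*} {g : ι → Dual K V}
    (hg : LinearIndependent K g) : Coindependent K fun i ↦ ker (g i) := by
  intro F i _
  set s : Set ι := {j | j ∈ F ∧ j ≠ i}
  have hX : (⨅ j ∈ F, ⨅ _ : j ≠ i, ker (g j)) = (span K (g '' s)).dualCoannihilator := by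
    rw [dualCoannihilator_span_image]
    simp only [s, Set.mem_ofPred_eq, iInf_and]
  have : FiniteDimensional K (span K (g '' s)) :=
    FiniteDimensional.span_of_finite K ((F.finite_toSet.subset fun j hj ↦ hj.1).image g)
  have hnot : ¬ (span K (g '' s)).dualCoannihilator ≤ ker (g i) := fun hle ↦
    hg.notMem_span_image (s := s) (fun hi ↦ hi.2 rfl) <| by
      rw [← Subspace.dualCoannihilator_dualAnnihilator_eq (W := span K (g '' s)),
        mem_dualAnnihilator]
      exact fun w hw ↦ hle hw
  rw [hX]
  exact (isCoatom_ker_of_surjective (LinearMap.surjective (hg.ne_zero i))).2 _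
    (left_lt_sup.mpr hnot)

theorem Submodule.rank_quotient_comap_subtype_add_rank_quotient {C U : Submodule K V}
    (h : C ≤ U) :
    Module.rank K (U ⧸ C.comap U.subtype) + Module.rank K (V ⧸ U) =
      Module.rank K (V ⧸ C) := by
  have e : (U ⧸ C.comap U.subtype) ≃ₗ[K] U.map C.mkQ :=
    (quotEquivOfEq _ _ (by rw [ker_comp, ker_mkQ])).trans
      ((C.mkQ ∘ₗ U.subtype).quotKerEquivRange.trans
        (LinearEquiv.ofEq _ _ (by rw [range_comp, range_subtype])))
  rw [e.rank_eq, ← (quotientQuotientEquivQuotient C U h).rank_eq, add_comm,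
    rank_quotient_add_rank_of_divisionRing]

theorem linearIndependent_of_notMem_span_image_Iio {v : ℕ → V}
    (h : ∀ n, v n ∉ span K (v '' Set.Iio n)) : LinearIndependent K v := by
  have hIio (n : ℕ) : LinearIndepOn K v (Set.Iio n) := by
    induction n with
    | zero => simp
    | succ n ih =>
      have : Set.Iio (n + 1) = insert n (Set.Iio n) := by ext; simp
      rw [this]
      exact ih.insert (h n)
  rw [← linearIndepOn_univ_iff, ← Set.iUnion_Iio]
  exact linearIndepOn_iUnion_of_directed (fun m n ↦ ⟨max m n,
    Set.Iio_subset_Iio (le_max_left m n), Set.Iio_subset_Iio (le_max_right m n)⟩) hIio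

end Codimension

theorem ENNReal.tendsto_natCast_sub_one_div_natCast :
    Filter.Tendsto (fun n : ℕ ↦ ((n - 1 : ℕ) : ℝ≥0∞) / n) Filter.atTop (nhds 1) := by
  have h : Filter.Tendsto (fun n : ℕ ↦ 1 - (n : ℝ≥0∞)⁻¹) Filter.atTop (nhds 1) := by
    simpa [Function.comp_def] using
      ((ENNReal.continuous_sub_left ENNReal.one_ne_top).tendsto 0).comp
        ENNReal.tendsto_inv_nat_nhds_zero
  refine h.congr' ?_
  filter_upwards [Filter.eventually_ge_atTop 1] with n hn
  have hn0 : (n : ℝ≥0∞) ≠ 0 := by exact_mod_cast (by omega : n ≠ 0)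
  rw [ENNReal.natCast_sub, ENNReal.sub_div fun _ _ ↦ hn0,
    ENNReal.div_self hn0 (ENNReal.natCast_ne_top n), Nat.cast_one, one_div]

section Cotrajectory

variable {K V : Type*} [Field K] [AddCommGroup V] [Module K V] (φ : V →ₗ[K] V)
  (U : Submodule K V)

theorem Cn_zero : Cn φ U 0 = ⊤ := by
  simp [Cn]

theorem Cn_succ (n : ℕ) : Cn φ U (n + 1) = U ⊓ (Cn φ U n).comap φ := by
  ext x
  simp only [Cn, mem_inf, mem_comap, mem_iInf, Finset.mem_range, Nat.forall_lt_succ_left,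
    pow_zero, Module.End.one_apply, pow_succ, Module.End.mul_apply]

theorem Cn_succ' (n : ℕ) : Cn φ U (n + 1) = Cn φ U n ⊓ U.comap (φ ^ n) := by
  ext x
  simp only [Cn, mem_inf, mem_comap, mem_iInf, Finset.mem_range, Nat.forall_lt_succ_right]

theorem Cn_le_self {n : ℕ} (hn : 1 ≤ n) : Cn φ U n ≤ U := by
  obtain ⟨m, rfl⟩ := Nat.exists_eq_add_of_le' hn
  rw [Cn_succ]
  exact inf_le_left

theorem Cn_eq_of_succ_eq {n : ℕ} (h : Cn φ U (n + 1) = Cn φ U n) {m : ℕ} (hm : n ≤ m) :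
    Cn φ U m = Cn φ U n := by
  induction m, hm using Nat.le_induction with
  | base => rfl
  | succ m _ ih => rw [Cn_succ, ih, ← Cn_succ, h]

theorem Cotraj_eq_Cn_of_succ_eq {n : ℕ} (h : Cn φ U (n + 1) = Cn φ U n) :
    Cotraj φ U = Cn φ U n := by
  refine le_antisymm (le_iInf₂ fun k _ ↦ iInf_le _ k) (le_iInf fun k ↦ ?_)
  rw [← Cn_eq_of_succ_eq φ U h (le_max_left n (k + 1))]
  exact iInf₂_le k (Finset.mem_range.mpr (by omega))

variable {φ U}

theorem isOpen_Cn [TopologicalSpace V] (hφ : Continuous φ) (hU : IsOpen (U : Set V)) (n : ℕ) :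
    IsOpen (Cn φ U n : Set V) := by
  induction n with
  | zero => simp [Cn_zero]
  | succ n ih =>
    rw [Cn_succ, coe_inf, comap_coe]
    exact hU.inter (ih.preimage hφ)

theorem Cn_succ_ne_of_not_isOpen_Cotraj [TopologicalSpace V] (hφ : Continuous φ)
    (hU : IsOpen (U : Set V)) (hC : ¬ IsOpen (Cotraj φ U : Set V)) (n : ℕ) :
    Cn φ U (n + 1) ≠ Cn φ U n := fun h ↦
  hC (Cotraj_eq_Cn_of_succ_eq φ U h ▸ isOpen_Cn hφ hU n)

variable (φ)

theorem Cn_ker (f : Dual K V) (n : ℕ) :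
    Cn φ (ker f) n = ⨅ k ∈ Finset.range n, ker (f ∘ₗ φ ^ k) := by
  simp only [Cn, ker_comp]

theorem linearIndependent_comp_pow_of_Cn_succ_ne (f : Dual K V)
    (h : ∀ n, Cn φ (ker f) (n + 1) ≠ Cn φ (ker f) n) :
    LinearIndependent K fun k ↦ f ∘ₗ φ ^ k := by
  refine linearIndependent_of_notMem_span_image_Iio fun n hn ↦ h n ?_
  have hCn : Cn φ (ker f) n =
      (span K ((fun k ↦ f ∘ₗ φ ^ k) '' Set.Iio n)).dualCoannihilator := by
    rw [Cn_ker, dualCoannihilator_span_image]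
    simp only [Finset.mem_range, Set.mem_Iio]
  have hle : Cn φ (ker f) n ≤ (ker f).comap (φ ^ n) := fun x hx ↦ by
    rw [hCn, mem_dualCoannihilator] at hx
    exact hx _ hn
  rw [Cn_succ', inf_of_le_left hle]

theorem rank_quotient_Cn {f : Dual K V} (hf : LinearIndependent K fun k ↦ f ∘ₗ φ ^ k)
    (n : ℕ) :
    Module.rank K (V ⧸ Cn φ (ker f) n) = n := by
  rw [Cn_ker, hf.rank_quotient_biInf_ker, Finset.card_range]

theorem rank_quotient_comap_subtype_Cn {f : Dual K V}
    (hf : LinearIndependent K fun k ↦ f ∘ₗ φ ^ k) {n : ℕ} (hn : 1 ≤ n) :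
    Module.rank K (ker f ⧸ (Cn φ (ker f) n).comap (ker f).subtype) = (n - 1 : ℕ) := by
  have hsum := rank_quotient_comap_subtype_add_rank_quotient (Cn_le_self φ (ker f) hn)
  have hf0 : f ≠ 0 := by simpa [Module.End.one_eq_id] using hf.ne_zero 0
  rw [rank_quotient_Cn φ hf, rank_eq_one_iff_finrank_eq_one.mpr
    (Module.Dual.finrank_quotient_ker hf0)] at hsum
  rw [← Cardinal.add_one_inj, hsum]
  norm_cast
  omega

theorem HStar_eq_one_of_rank
    (h : ∀ n, 1 ≤ n → Module.rank K (U ⧸ (Cn φ U n).comap U.subtype) = (n - 1 : ℕ)) :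
    HStar φ U = 1 := by
  refine Filter.Tendsto.limsup_eq (ENNReal.tendsto_natCast_sub_one_div_natCast.congr' ?_)
  filter_upwards [Filter.eventually_ge_atTop 1] with n hn
  rw [h n hn, Cardinal.toENat_nat]
  rfl

end Cotrajectory

theorem stmt_2_general {𝕂 V : Type*} [Field 𝕂]
    [AddCommGroup V] [Module 𝕂 V] [TopologicalSpace V] [IsTopologicalAddGroup V]
    (φ : V →ₗ[𝕂] V) (hφ : Continuous φ)
    (U : Submodule 𝕂 V) (hUopen : IsOpen (U : Set V))
    (hcocyclic : Module.finrank 𝕂 (V ⧸ U) = 1)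
    (hns : ¬ IsOpen ((Cotraj φ U : Set V))) :
    (∀ n : ℕ, IsClosed ((Submodule.comap (φ ^ n) U : Set V)) ∧
        Module.finrank 𝕂 (V ⧸ Submodule.comap (φ ^ n) U) = 1) ∧
    Coindependent 𝕂 (fun n : ℕ => Submodule.comap (φ ^ n) U) ∧
    HStar φ U = 1 := by
  obtain ⟨f, rfl⟩ := Module.Dual.exists_ker_eq_of_finrank_quotient_eq_one hcocyclic
  have hf := linearIndependent_comp_pow_of_Cn_succ_ne φ f
    (Cn_succ_ne_of_not_isOpen_Cotraj hφ hUopen hns)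
  have hker (n : ℕ) : (ker f).comap (φ ^ n) = ker (f ∘ₗ φ ^ n) := (ker_comp _ _).symm
  refine ⟨fun n ↦ ⟨?_, ?_⟩, ?_, ?_⟩
  · have hcont : Continuous (φ ^ n) := by
      rw [Module.End.coe_pow]
      exact hφ.iterate n
    exact AddSubgroup.isClosed_of_isOpen ((ker f).comap (φ ^ n)).toAddSubgroup
      (hUopen.preimage hcont)
  · rw [hker]
    exact Module.Dual.finrank_quotient_ker (hf.ne_zero n)
  · simpa only [hker] using hf.coindependent_ker
  · exact HStar_eq_one_of_rank φ fun n ↦ rank_quotient_comap_subtype_Cn φ hf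

/-- Let `(V,φ)` be a topological flow and `U` an open `𝕂`-subspace of `V`
such that the `φ`-cotrajectory `C(φ,U)` is cocyclic (`dim_𝕂 (V/U) = 1`) and non-stationary
(`C(φ,U)` is not open).  Then (1) each closed subspace `φ⁻ⁿU` has codimension `1` in `V`;
(2) the family `{φ⁻ⁿU : n ∈ ℕ}` is coindependent in `V`; (3) `H*(φ,U) = 1`. -/
theorem stmt_2 {𝕂 V : Type*} [Field 𝕂] [TopologicalSpace 𝕂] [DiscreteTopology 𝕂]
    [AddCommGroup V] [Module 𝕂 V] [TopologicalSpace V] [IsTopologicalAddGroup V]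
    [ContinuousSMul 𝕂 V]
    (hV : IsLinearlyCompact 𝕂 V) (φ : V →ₗ[𝕂] V) (hφ : Continuous φ)
    (U : Submodule 𝕂 V) (hUopen : IsOpen (U : Set V))
    (hcocyclic : Module.finrank 𝕂 (V ⧸ U) = 1)
    (hns : ¬ IsOpen ((Cotraj φ U : Set V))) :
    (∀ n : ℕ, IsClosed ((Submodule.comap (φ ^ n) U : Set V)) ∧
        Module.finrank 𝕂 (V ⧸ Submodule.comap (φ ^ n) U) = 1) ∧
    Coindependent 𝕂 (fun n : ℕ => Submodule.comap (φ ^ n) U) ∧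
    HStar φ U = 1 :=
  stmt_2_general φ hφ U hUopen hcocyclic hns
end

section
/- Let (V,φ) be a topological flow. Then ent*(V,φ) = 0 if, and only if, ent(V̂, φ̂) = 0, where (V̂, φ̂) is the Lefschetz dual flow of (V,φ). -/
open scoped ENNReal

/-- `Tn ψ F n = F + ψF + ⋯ + ψⁿ⁻¹F`. -/
noncomputable def Tn {𝕂 W : Type*} [Field 𝕂] [AddCommGroup W] [Module 𝕂 W]
    (ψ : W →ₗ[𝕂] W) (F : Submodule 𝕂 W) (n : ℕ) : Submodule 𝕂 W :=
  ⨆ k ∈ Finset.range n, Submodule.map (ψ ^ k) F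

/-- `H(ψ,F) = lim_{n→∞} (1/n)·dim_𝕂 ((F + ψF + ⋯ + ψⁿ⁻¹F)/F)`, realized as a limsup in
`ℝ≥0∞` (the limit exists, so it coincides with the limsup). -/
noncomputable def HAlg {𝕂 W : Type*} [Field 𝕂] [AddCommGroup W] [Module 𝕂 W]
    (ψ : W →ₗ[𝕂] W) (F : Submodule 𝕂 W) : ℝ≥0∞ :=
  Filter.atTop.limsup fun n : ℕ =>
    (((Module.rank 𝕂 (↥(Tn ψ F n) ⧸ Submodule.comap (Tn ψ F n).subtype F)).toENat : ℕ∞) :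
      ℝ≥0∞) / (n : ℝ≥0∞)

/-- The algebraic entropy `ent(W,ψ) = sup_F H(ψ,F)`, the supremum ranging over all
finite-dimensional `𝕂`-subspaces `F` of `W`. -/
noncomputable def entAlg (𝕂 W : Type*) [Field 𝕂] [AddCommGroup W] [Module 𝕂 W]
    (ψ : W →ₗ[𝕂] W) : ℝ≥0∞ :=
  ⨆ (F : Submodule 𝕂 W) (_ : FiniteDimensional 𝕂 ↥F), HAlg ψ F

/-- The Lefschetz dual endomorphism `φ̂ : V̂ → V̂`, `φ̂(χ) = χ ∘ φ`, on the Lefschetz dual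
`V̂ = CHom(V,𝕂)` (all continuous `𝕂`-linear maps `V → 𝕂`, `𝕂` discrete), regarded as a
discrete `𝕂`-vector space. -/
def dualFlow {𝕂 V : Type*} [Field 𝕂] [TopologicalSpace 𝕂] [DiscreteTopology 𝕂]
    [AddCommGroup V] [Module 𝕂 V] [TopologicalSpace V]
    (φ : V →ₗ[𝕂] V) (hφ : Continuous φ) : (V →L[𝕂] 𝕂) →ₗ[𝕂] (V →L[𝕂] 𝕂) where
  toFun χ := χ.comp ⟨φ, hφ⟩
  map_add' _ _ := by ext; rfl
  map_smul' _ _ := by ext; rfl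


/-! ### Auxiliary lemmas -/

set_option linter.unusedSectionVars false

open Module in
lemma toENat_rank_quot_le_of_pairing {𝕂 : Type*} {M N : Type*} [Field 𝕂]
    [AddCommGroup M] [Module 𝕂 M] [AddCommGroup N] [Module 𝕂 N]
    (B : M →ₗ[𝕂] N →ₗ[𝕂] 𝕂) (A : Submodule 𝕂 M) (C : Submodule 𝕂 N)
    (hC : ∀ m : M, ∀ c ∈ C, B m c = 0)
    (hA : ∀ a ∈ A, ∀ n : N, B a n = 0)
    (hker : ∀ m : M, (∀ n : N, B m n = 0) → m ∈ A) :
    (Module.rank 𝕂 (M ⧸ A)).toENat ≤ (Module.rank 𝕂 (N ⧸ C)).toENat := by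
  have hle : ∀ m : M, C ≤ LinearMap.ker (B m) := fun m c hc => hC m c hc
  let g : M →ₗ[𝕂] Module.Dual 𝕂 (N ⧸ C) :=
    { toFun := fun m => C.liftQ (B m) (hle m)
      map_add' := by
        intro m₁ m₂; ext x
        simp [Submodule.liftQ_apply]
      map_smul' := by
        intro c m; ext x
        simp [Submodule.liftQ_apply] }
  have hgA : A ≤ LinearMap.ker g := by
    intro a ha
    rw [LinearMap.mem_ker]
    ext x
    simpa [g, Submodule.liftQ_apply] using hA a ha x
  let f : (M ⧸ A) →ₗ[𝕂] Module.Dual 𝕂 (N ⧸ C) := A.liftQ g hgA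
  have hker' : LinearMap.ker g ≤ A := by
    intro m hm
    rw [LinearMap.mem_ker] at hm
    refine hker m fun n => ?_
    have := congrArg (fun h => h (Submodule.Quotient.mk n)) hm
    simpa [g, Submodule.liftQ_apply] using this
  have hinj : Function.Injective f :=
    LinearMap.ker_eq_bot.mp (Submodule.ker_liftQ_eq_bot A g hgA hker')
  have hrank := LinearMap.lift_rank_le_of_injective f hinj
  by_cases htop : Cardinal.aleph0 ≤ Module.rank 𝕂 (N ⧸ C)
  · rw [(Cardinal.toENat_eq_top).mpr htop]; exact le_top
  · push_neg at htop
    have hfin : Module.Finite 𝕂 (N ⧸ C) := Module.rank_lt_aleph0_iff.mp htop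
    have hdual : Cardinal.lift.{_,_} (Module.rank 𝕂 (N ⧸ C))
        = Module.rank 𝕂 (Module.Dual 𝕂 (N ⧸ C)) := Module.dual_rank_eq.symm
    rw [← hdual] at hrank
    have := (Cardinal.enat_gc.monotone_u hrank)
    simpa using this


section Abstract

variable {𝕂 W V : Type*} [Field 𝕂] [AddCommGroup W] [Module 𝕂 W]
  [AddCommGroup V] [Module 𝕂 V]

/-- restriction of a pairing to submodules -/
def pairRes (P : W →ₗ[𝕂] V →ₗ[𝕂] 𝕂) (T' : Submodule 𝕂 W) (U' : Submodule 𝕂 V) :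
    ↥T' →ₗ[𝕂] ↥U' →ₗ[𝕂] 𝕂 where
  toFun χ :=
    { toFun := fun u => P χ.val u.val
      map_add' := fun a b => by simp
      map_smul' := fun c a => by simp }
  map_add' a b := by ext u; simp
  map_smul' c a := by ext u; simp

lemma pow_adjoint (P : W →ₗ[𝕂] V →ₗ[𝕂] 𝕂) (ψ : W →ₗ[𝕂] W) (φ : V →ₗ[𝕂] V)
    (hadj : ∀ χ v, P (ψ χ) v = P χ (φ v)) (k : ℕ) :
    ∀ χ v, P ((ψ ^ k) χ) v = P χ ((φ ^ k) v) := by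
  induction k with
  | zero => intro χ v; simp
  | succ k ih =>
    intro χ v
    have h1 : (ψ ^ (k+1)) χ = (ψ ^ k) (ψ χ) := by rw [pow_succ]; rfl
    have h2 : (φ ^ (k+1)) v = φ ((φ ^ k) v) := by rw [pow_succ']; rfl
    rw [h1, ih, hadj, h2]

lemma mem_Cn' {φ : V →ₗ[𝕂] V} {U : Submodule 𝕂 V} {n : ℕ} {v : V} :
    v ∈ Cn φ U n ↔ ∀ k < n, (φ ^ k) v ∈ U := by
  simp [Cn, Submodule.mem_iInf]

lemma Tn_Cn_vanish (P : W →ₗ[𝕂] V →ₗ[𝕂] 𝕂) (ψ : W →ₗ[𝕂] W) (φ : V →ₗ[𝕂] V)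
    (hadj : ∀ χ v, P (ψ χ) v = P χ (φ v)) (F : Submodule 𝕂 W) (U : Submodule 𝕂 V)
    (hFU : ∀ χ ∈ F, ∀ v ∈ U, P χ v = 0) (n : ℕ) :
    ∀ χ ∈ Tn ψ F n, ∀ u ∈ Cn φ U n, P χ u = 0 := by
  intro χ hχ u hu
  have hle : Tn ψ F n ≤ LinearMap.ker ((P.flip) u) := by
    refine iSup₂_le fun k hk => ?_
    rintro ξ ⟨χ₀, hχ₀, rfl⟩
    rw [LinearMap.mem_ker, LinearMap.flip_apply, pow_adjoint P ψ φ hadj]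
    exact hFU χ₀ hχ₀ _ (mem_Cn'.mp hu k (Finset.mem_range.mp hk))
  exact hle hχ

lemma key_A (P : W →ₗ[𝕂] V →ₗ[𝕂] 𝕂) (ψ : W →ₗ[𝕂] W) (φ : V →ₗ[𝕂] V)
    (hadj : ∀ χ v, P (ψ χ) v = P χ (φ v)) (F : Submodule 𝕂 W) (U : Submodule 𝕂 V)
    (hFU : ∀ χ ∈ F, ∀ v ∈ U, P χ v = 0)
    (hfull : ∀ χ : W, (∀ v ∈ U, P χ v = 0) → χ ∈ F) (n : ℕ) :
    (Module.rank 𝕂 (↥(Tn ψ F n) ⧸ Submodule.comap (Tn ψ F n).subtype F)).toENat ≤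
      (Module.rank 𝕂 (↥U ⧸ Submodule.comap U.subtype (Cn φ U n))).toENat := by
  apply toENat_rank_quot_le_of_pairing (pairRes P (Tn ψ F n) U)
  · intro χ u hu
    exact Tn_Cn_vanish P ψ φ hadj F U hFU n χ.val χ.prop u.val hu
  · intro a haF u
    exact hFU a.val haF u.val u.prop
  · intro χ hχ
    exact hfull χ.val fun v hv => hχ ⟨v, hv⟩

lemma key_B (P : W →ₗ[𝕂] V →ₗ[𝕂] 𝕂) (ψ : W →ₗ[𝕂] W) (φ : V →ₗ[𝕂] V)
    (hadj : ∀ χ v, P (ψ χ) v = P χ (φ v)) (F : Submodule 𝕂 W) (U : Submodule 𝕂 V)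
    (hFU : ∀ χ ∈ F, ∀ v ∈ U, P χ v = 0)
    (hsep : ∀ v : V, v ∉ U → ∃ χ ∈ F, P χ v ≠ 0) (n : ℕ) :
    (Module.rank 𝕂 (↥U ⧸ Submodule.comap U.subtype (Cn φ U n))).toENat ≤
      (Module.rank 𝕂 (↥(Tn ψ F n) ⧸ Submodule.comap (Tn ψ F n).subtype F)).toENat := by
  apply toENat_rank_quot_le_of_pairing ((pairRes P (Tn ψ F n) U).flip)
  · intro u χ hχ
    exact hFU χ.val hχ u.val u.prop
  · intro u hu χ
    exact Tn_Cn_vanish P ψ φ hadj F U hFU n χ.val χ.prop u.val hu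
  · intro u h
    rw [Submodule.mem_comap, show U.subtype u = u.val from rfl, mem_Cn']
    intro k hk
    by_contra hne
    obtain ⟨χ₀, hχ₀F, hnz⟩ := hsep _ hne
    have hmem : (ψ ^ k) χ₀ ∈ Tn ψ F n := by
      have h1 : Submodule.map (ψ ^ k) F ≤ Tn ψ F n :=
        le_iSup₂ (f := fun k (_ : k ∈ Finset.range n) => Submodule.map (ψ ^ k) F) k
          (Finset.mem_range.mpr hk)
      exact h1 (Submodule.mem_map_of_mem hχ₀F)
    have h2 : P ((ψ ^ k) χ₀) u.val = 0 := h ⟨_, hmem⟩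
    rw [pow_adjoint P ψ φ hadj] at h2
    exact hnz h2

end Abstract

section Aux

variable {𝕂 V : Type*} [Field 𝕂] [TopologicalSpace 𝕂] [DiscreteTopology 𝕂]
    [AddCommGroup V] [Module 𝕂 V] [TopologicalSpace V] [IsTopologicalAddGroup V]
    [ContinuousSMul 𝕂 V]

lemma dualFlow_pow_apply (φ : V →ₗ[𝕂] V) (hφ : Continuous φ) (k : ℕ)
    (χ : V →L[𝕂] 𝕂) (v : V) : ((dualFlow φ hφ ^ k) χ) v = χ ((φ ^ k) v) := by
  induction k generalizing χ with
  | zero => simp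
  | succ k ih =>
    have h1 : (dualFlow φ hφ ^ (k+1)) χ = (dualFlow φ hφ ^ k) (dualFlow φ hφ χ) := by
      rw [pow_succ]; rfl
    rw [h1, ih, pow_succ']
    rfl

lemma mem_Cn {φ : V →ₗ[𝕂] V} {U : Submodule 𝕂 V} {n : ℕ} {v : V} :
    v ∈ Cn φ U n ↔ ∀ k < n, (φ ^ k) v ∈ U := by
  simp [Cn, Submodule.mem_iInf]

/-- evaluation at a point, as a linear map on the continuous dual -/
def evalAt (v : V) : (V →L[𝕂] 𝕂) →ₗ[𝕂] 𝕂 where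
  toFun χ := χ v
  map_add' _ _ := rfl
  map_smul' _ _ := rfl

lemma Tn_vanish {φ : V →ₗ[𝕂] V} {hφ : Continuous φ} {U : Submodule 𝕂 V}
    (F : Submodule 𝕂 (V →L[𝕂] 𝕂)) (hF : ∀ χ ∈ F, ∀ v ∈ U, χ v = 0) (n : ℕ)
    {u : V} (hu : u ∈ Cn φ U n) :
    ∀ χ ∈ Tn (dualFlow φ hφ) F n, χ u = 0 := by
  have : Tn (dualFlow φ hφ) F n ≤ LinearMap.ker (evalAt u) := by
    refine iSup₂_le fun k hk => ?_
    rintro χ ⟨χ₀, hχ₀, rfl⟩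
    simp only [LinearMap.mem_ker, evalAt, LinearMap.coe_mk, AddHom.coe_mk]
    rw [dualFlow_pow_apply]
    exact hF χ₀ hχ₀ _ (mem_Cn.mp hu k (Finset.mem_range.mp hk))
  exact fun χ hχ => this hχ

lemma isOpen_of_add_open {U : Submodule 𝕂 V} (hU : IsOpen (U : Set V)) {s : Set V}
    (h : ∀ x ∈ s, ∀ u ∈ U, x + u ∈ s) : IsOpen s := by
  rw [isOpen_iff_mem_nhds]
  intro x hx
  rw [mem_nhds_iff]
  exact ⟨(x + ·) '' U, by rintro _ ⟨u, hu, rfl⟩; exact h x hx u hu,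
    isOpenMap_add_left x _ hU, ⟨0, U.zero_mem, by simp⟩⟩

lemma continuous_of_vanish_open {U : Submodule 𝕂 V} (hU : IsOpen (U : Set V))
    (χ : V →ₗ[𝕂] 𝕂) (hχ : ∀ v ∈ U, χ v = 0) : Continuous χ := by
  rw [continuous_def]
  intro s _
  refine isOpen_of_add_open hU fun x hx u hu => ?_
  simpa [hχ u hu] using hx

lemma exists_ann_ne_zero {U : Submodule 𝕂 V} (hU : IsOpen (U : Set V)) {v : V} (hv : v ∉ U) :
    ∃ χ : V →L[𝕂] 𝕂, (∀ u ∈ U, χ u = 0) ∧ χ v ≠ 0 := by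
  have hv' : (Submodule.Quotient.mk v : V ⧸ U) ≠ 0 := by
    simpa [Submodule.Quotient.mk_eq_zero] using hv
  obtain ⟨g, hg⟩ : ∃ g : Module.Dual 𝕂 (V ⧸ U), g (Submodule.Quotient.mk v) ≠ 0 := by
    by_contra h; push_neg at h
    exact hv' ((Module.forall_dual_apply_eq_zero_iff 𝕂 _).mp h)
  let χ₀ : V →ₗ[𝕂] 𝕂 := g ∘ₗ U.mkQ
  have hvan : ∀ u ∈ U, χ₀ u = 0 := fun u hu => by
    simp [χ₀, (Submodule.Quotient.mk_eq_zero _).mpr hu]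
  exact ⟨⟨χ₀, continuous_of_vanish_open hU χ₀ hvan⟩, hvan, by simpa [χ₀] using hg⟩

/-- the annihilator of `U` in the continuous dual -/
def annF (U : Submodule 𝕂 V) : Submodule 𝕂 (V →L[𝕂] 𝕂) where
  carrier := {χ | ∀ v ∈ U, χ v = 0}
  add_mem' := fun {a b} ha hb v hv => by simp [ha v hv, hb v hv]
  zero_mem' := fun v hv => rfl
  smul_mem' := fun c {χ} h v hv => by simp [h v hv]

lemma mem_annF {U : Submodule 𝕂 V} {χ : V →L[𝕂] 𝕂} :
    χ ∈ annF U ↔ ∀ v ∈ U, χ v = 0 := Iff.rfl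

lemma annF_findim (U : Submodule 𝕂 V) [FiniteDimensional 𝕂 (V ⧸ U)] :
    FiniteDimensional 𝕂 (annF U) := by
  let g : annF U →ₗ[𝕂] Module.Dual 𝕂 (V ⧸ U) :=
    { toFun := fun χ => U.liftQ (χ.val : V →ₗ[𝕂] 𝕂) (fun v hv => by
        simpa using χ.prop v hv)
      map_add' := by intro a b; ext v; simp
      map_smul' := by intro c a; ext v; simp }
  have hg : Function.Injective g := by
    intro a b hab
    ext v
    have := congrArg (fun h => h (Submodule.Quotient.mk v)) hab
    simpa [g, Submodule.liftQ_apply] using this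
  exact FiniteDimensional.of_injective g hg

lemma findim_quot_of_open (hV : IsLinearlyCompact 𝕂 V) (U : Submodule 𝕂 V)
    (hU : IsOpen (U : Set V)) : FiniteDimensional 𝕂 (V ⧸ U) := by
  by_contra hfin
  set b := Module.Basis.ofVectorSpace 𝕂 (V ⧸ U) with hb
  have hinf : Infinite (Module.Basis.ofVectorSpaceIndex 𝕂 (V ⧸ U)) := by
    by_contra h
    rw [not_infinite_iff_finite] at h
    exact hfin (Module.Finite.of_basis b)
  let emb := Infinite.natEmbedding (Module.Basis.ofVectorSpaceIndex 𝕂 (V ⧸ U))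
  let L : ℕ → V →ₗ[𝕂] 𝕂 := fun n => (b.coord (emb n)) ∘ₗ U.mkQ
  let N : ℕ → Submodule 𝕂 V := fun n => LinearMap.ker (L n)
  have hUN : ∀ n, U ≤ N n := fun n u hu => by
    simp [N, L, (Submodule.Quotient.mk_eq_zero _).mpr hu]
  obtain ⟨w, hw⟩ : ∃ w : ℕ → V, ∀ n, U.mkQ (w n) = b (emb n) := by
    choose w hw using fun n => U.mkQ_surjective (b (emb n))
    exact ⟨w, hw⟩
  have hLw : ∀ n m, L n (w m) = if m = n then 1 else 0 := by
    intro n m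
    simp only [L, LinearMap.comp_apply, hw, Module.Basis.coord_apply, Module.Basis.repr_self]
    rw [show (emb m : Module.Basis.ofVectorSpaceIndex 𝕂 (V ⧸ U)) = emb m from rfl,
      Finsupp.single_apply_left emb.injective, Finsupp.single_apply]
  have hclosed : ∀ n, IsClosed ((N n : Set V)) := by
    intro n
    rw [← isOpen_compl_iff]
    refine isOpen_of_add_open hU fun x hx u hu => fun hmem => hx ?_
    have : x = (x + u) + (-u) := by abel
    rw [this]
    exact (N n).add_mem hmem ((N n).neg_mem (hUN n hu))
  have hFIP : ∀ F : Finset ℕ, (⋂ n ∈ F, ((w n + ·) '' (N n : Set V))).Nonempty := by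
    intro F
    refine ⟨∑ i ∈ F, w i, Set.mem_iInter₂.mpr fun n hn => ?_⟩
    refine ⟨(∑ i ∈ F, w i) - w n, ?_, show w n + _ = _ by rw [add_comm, sub_add_cancel]⟩
    have : L n ((∑ i ∈ F, w i) - w n) = 0 := by
      rw [map_sub, map_sum]
      simp only [hLw]
      rw [Finset.sum_ite_eq' F n (fun _ => (1 : 𝕂))]
      simp [hn]
    exact this
  obtain ⟨x, hx⟩ := hV.2.2 ℕ N w hclosed hFIP
  have hx1 : ∀ n, L n x = 1 := by
    intro n
    obtain ⟨y, hy, hxy⟩ := Set.mem_iInter.mp hx n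
    have hxy' : w n + y = x := hxy
    have hy0 : L n y = 0 := hy
    rw [← hxy', map_add, hLw, if_pos rfl, hy0, add_zero]
  obtain ⟨n₀, hn₀⟩ := Infinite.exists_notMem_finset
    ((b.repr (U.mkQ x)).support.preimage emb (emb.injective.injOn))
  have : L n₀ x = 0 := by
    have h0 : b.repr (U.mkQ x) (emb n₀) = 0 := by
      by_contra h
      exact hn₀ (Finset.mem_preimage.mpr (Finsupp.mem_support_iff.mpr h))
    simpa [L, Module.Basis.coord_apply] using h0
  rw [hx1 n₀] at this
  exact one_ne_zero this

/-- For a finite-dimensional subspace `F` of the continuous dual, there is an open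
subspace `U` of `V` which is exactly the annihilated subspace of `F`. -/
lemma exists_open_ann (F : Submodule 𝕂 (V →L[𝕂] 𝕂)) (hF : FiniteDimensional 𝕂 F) :
    ∃ U : Submodule 𝕂 V, IsOpen (U : Set V) ∧ (∀ χ ∈ F, ∀ v ∈ U, χ v = 0) ∧
      (∀ χ : V →L[𝕂] 𝕂, (∀ v ∈ U, χ v = 0) → χ ∈ F) := by
  obtain ⟨S, hS⟩ : F.FG := (Submodule.fg_iff_finiteDimensional F).mpr hF
  let U : Submodule 𝕂 V := ⨅ σ : S, LinearMap.ker ((σ : V →L[𝕂] 𝕂) : V →ₗ[𝕂] 𝕂)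
  have hmemU : ∀ v : V, v ∈ U ↔ ∀ σ : S, (σ : V →L[𝕂] 𝕂) v = 0 := by
    intro v
    simp [U, Submodule.mem_iInf]
  refine ⟨U, ?_, ?_, ?_⟩
  · have : (U : Set V) = ⋂ σ : S, (LinearMap.ker (((σ : V →L[𝕂] 𝕂) : V →ₗ[𝕂] 𝕂)) : Set V) :=
      Submodule.coe_iInf _
    rw [this]
    refine isOpen_iInter_of_finite fun σ => ?_
    have : (LinearMap.ker (((σ : V →L[𝕂] 𝕂) : V →ₗ[𝕂] 𝕂)) : Set V) = (σ : V →L[𝕂] 𝕂) ⁻¹' {0} := by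
      ext v; simp [LinearMap.mem_ker]
    rw [this]
    exact ((σ : V →L[𝕂] 𝕂).continuous).isOpen_preimage _ (isOpen_discrete _)
  · intro χ hχ
    rw [← hS] at hχ
    induction hχ using Submodule.span_induction with
    | mem χ hχ => exact fun v hv => (hmemU v).mp hv ⟨χ, hχ⟩
    | zero => exact fun v _ => rfl
    | add a b _ _ ha hb => exact fun v hv => by simp [ha v hv, hb v hv]
    | smul c a _ ha => exact fun v hv => by simp [ha v hv]
  · intro χ hχ
    have h' : (⨅ σ : S, LinearMap.ker ((σ : V →L[𝕂] 𝕂) : V →ₗ[𝕂] 𝕂))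
        ≤ LinearMap.ker (χ : V →ₗ[𝕂] 𝕂) := by
      intro v hv
      have hvU : v ∈ U := by
        rw [hmemU]
        intro σ
        have := Submodule.mem_iInf _ |>.mp hv σ
        simpa using this
      simpa using hχ v hvU
    have hspan := mem_span_of_iInf_ker_le_ker h'
    have hrange : Set.range (fun σ : S => ((σ : V →L[𝕂] 𝕂) : V →ₗ[𝕂] 𝕂))
        = (ContinuousLinearMap.coeLM 𝕂) '' (S : Set (V →L[𝕂] 𝕂)) := by
      ext ξ
      constructor
      · rintro ⟨σ, rfl⟩; exact ⟨σ, σ.prop, rfl⟩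
      · rintro ⟨σ, hσ, rfl⟩; exact ⟨⟨σ, hσ⟩, rfl⟩
    rw [hrange, ← Submodule.map_span, hS] at hspan
    obtain ⟨χ', hχ', heq⟩ := hspan
    have : χ' = χ := ContinuousLinearMap.coe_injective heq
    rwa [← this]

/-- the tautological pairing between a submodule of the continuous dual and a submodule
of `V` -/
def pairTU (T' : Submodule 𝕂 (V →L[𝕂] 𝕂)) (U' : Submodule 𝕂 V) :
    ↥T' →ₗ[𝕂] ↥U' →ₗ[𝕂] 𝕂 where
  toFun χ :=
    { toFun := fun u => χ.val u.val
      map_add' := fun a b => by simp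
      map_smul' := fun c a => by simp }
  map_add' a b := by ext u; simp
  map_smul' c a := by ext u; simp

end Aux


section Main

variable {𝕂 V : Type*} [Field 𝕂] [TopologicalSpace 𝕂] [DiscreteTopology 𝕂]
    [AddCommGroup V] [Module 𝕂 V] [TopologicalSpace V] [IsTopologicalAddGroup V]
    [ContinuousSMul 𝕂 V]

lemma HAlg_le_HStar (φ : V →ₗ[𝕂] V) (hφ : Continuous φ) (F : Submodule 𝕂 (V →L[𝕂] 𝕂))
    (U : Submodule 𝕂 V)
    (ha : ∀ χ ∈ F, ∀ v ∈ U, χ v = 0)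
    (hb : ∀ χ : V →L[𝕂] 𝕂, (∀ v ∈ U, χ v = 0) → χ ∈ F) :
    HAlg (dualFlow φ hφ) F ≤ HStar φ U := by
  unfold HAlg HStar
  refine Filter.limsup_le_limsup (Filter.Eventually.of_forall fun n => ?_)
  refine ENNReal.div_le_div_right ?_ _
  have key := key_A (ContinuousLinearMap.coeLM 𝕂) (dualFlow φ hφ) φ
    (fun χ v => rfl) F U ha hb n
  exact_mod_cast ENat.toENNReal_mono key

lemma HStar_le_HAlg (φ : V →ₗ[𝕂] V) (hφ : Continuous φ) (U : Submodule 𝕂 V)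
    (hU : IsOpen (U : Set V)) :
    HStar φ U ≤ HAlg (dualFlow φ hφ) (annF U) := by
  unfold HAlg HStar
  refine Filter.limsup_le_limsup (Filter.Eventually.of_forall fun n => ?_)
  refine ENNReal.div_le_div_right ?_ _
  have key := key_B (ContinuousLinearMap.coeLM 𝕂) (dualFlow φ hφ) φ
    (fun χ v => rfl) (annF U) U (fun χ hχ v hv => hχ v hv)
    (fun v hv => by
      obtain ⟨χ₀, hvan, hnz⟩ := exists_ann_ne_zero hU hv
      exact ⟨χ₀, hvan, hnz⟩) n
  exact_mod_cast ENat.toENNReal_mono key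

end Main

/-- For a topological flow `(V,φ)` one has `ent*(V,φ) = 0` if and only if
`ent(V̂, φ̂) = 0`, where `(V̂, φ̂)` is the Lefschetz dual flow of `(V,φ)`. -/
theorem stmt_5 {𝕂 V : Type*} [Field 𝕂] [TopologicalSpace 𝕂] [DiscreteTopology 𝕂]
    [AddCommGroup V] [Module 𝕂 V] [TopologicalSpace V] [IsTopologicalAddGroup V]
    [ContinuousSMul 𝕂 V]
    (hV : IsLinearlyCompact 𝕂 V) (φ : V →ₗ[𝕂] V) (hφ : Continuous φ) :
    entStar 𝕂 V φ = 0 ↔ entAlg 𝕂 (V →L[𝕂] 𝕂) (dualFlow φ hφ) = 0 := by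
  constructor
  · intro h
    have hS : ∀ (U : Submodule 𝕂 V), IsOpen (U : Set V) → HStar φ U = 0 := by
      intro U hU
      refine le_antisymm ?_ (zero_le)
      rw [← h]
      exact le_iSup₂ (f := fun U (_ : IsOpen ((U : Submodule 𝕂 V) : Set V)) => HStar φ U) U hU
    refine le_antisymm ?_ (zero_le)
    unfold entAlg
    refine iSup₂_le fun F hF => ?_
    obtain ⟨U, hUopen, ha, hb⟩ := exists_open_ann F hF
    calc HAlg (dualFlow φ hφ) F ≤ HStar φ U := HAlg_le_HStar φ hφ F U ha hb
    _ = 0 := hS U hUopen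
  · intro h
    have hS : ∀ F : Submodule 𝕂 (V →L[𝕂] 𝕂), FiniteDimensional 𝕂 ↥F →
        HAlg (dualFlow φ hφ) F = 0 := by
      intro F hF
      refine le_antisymm ?_ (zero_le)
      rw [← h]
      exact le_iSup₂ (f := fun (F : Submodule 𝕂 (V →L[𝕂] 𝕂)) (_ : FiniteDimensional 𝕂 ↥F) => HAlg (dualFlow φ hφ) F) F hF
    refine le_antisymm ?_ (zero_le)
    unfold entStar
    refine iSup₂_le fun U hU => ?_
    have hfd : FiniteDimensional 𝕂 (V ⧸ U) := findim_quot_of_open hV U hU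
    have hfd2 : FiniteDimensional 𝕂 (annF U) := annF_findim U
    calc HStar φ U ≤ HAlg (dualFlow φ hφ) (annF U) := HStar_le_HAlg φ hφ U hU
    _ = 0 := hS _ hfd2
end

section
/- Let (V,φ) be a topological flow and W a closed φ-invariant 𝕂-subspace of V with ent*(W, φ|_W) > 0. Then there exists a non-stationary cocyclic φ-cotrajectory C(φ,U) such that C(φ,U) + W = V. -/
open scoped ENNReal

open Filter Submodule

section AuxLemmas

variable {𝕂 V : Type*} [Field 𝕂] [AddCommGroup V] [Module 𝕂 V]

lemma aux_submodule_isClosed [TopologicalSpace V] [IsTopologicalAddGroup V]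
    (U : Submodule 𝕂 V) (h : IsOpen (U : Set V)) : IsClosed (U : Set V) :=
  U.toAddSubgroup.isClosed_of_isOpen h

lemma aux_mem_Cn {ψ : V →ₗ[𝕂] V} {U : Submodule 𝕂 V} {n : ℕ} {x : V} :
    x ∈ Cn ψ U n ↔ ∀ k, k < n → (ψ ^ k) x ∈ U := by
  simp [Cn, Submodule.mem_iInf, Finset.mem_range]

lemma aux_pi_surjective {n : ℕ} (g : Fin n → (V →ₗ[𝕂] 𝕂))
    (h : LinearIndependent 𝕂 g) : Function.Surjective (LinearMap.pi g) := by
  rw [← LinearMap.range_eq_top]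
  by_contra hne
  obtain ⟨c, hc0, hc⟩ := Submodule.exists_dual_map_eq_bot_of_lt_top
    (lt_top_iff_ne_top.2 hne) inferInstance
  have hrep : ∀ x : Fin n → 𝕂, c x = ∑ i, x i * c (Pi.single i 1) := by
    intro x
    have h1 : (∑ i, x i • (Pi.single i (1:𝕂) : Fin n → 𝕂)) = x := by
      rw [show (∑ i, x i • (Pi.single i (1:𝕂) : Fin n → 𝕂)) = ∑ i, Pi.single i (x i) from
        Finset.sum_congr rfl fun i _ => by rw [← Pi.single_smul, smul_eq_mul, mul_one]]
      exact Finset.univ_sum_single x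
    have h2 := congrArg c h1.symm
    rw [map_sum] at h2
    simpa [smul_eq_mul] using h2
  have hvan : ∀ v : V, c (LinearMap.pi g v) = 0 := by
    intro v
    have : c (LinearMap.pi g v) ∈ (LinearMap.range (LinearMap.pi g)).map c :=
      Submodule.mem_map_of_mem (LinearMap.mem_range_self _ v)
    rw [hc] at this
    simpa using this
  have hall : ∀ i, c (Pi.single i 1) = 0 := by
    refine Fintype.linearIndependent_iff.1 h (fun i => c (Pi.single i 1)) ?_
    ext v
    have := hvan v
    rw [hrep] at this
    simpa [LinearMap.pi_apply, mul_comm] using this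
  apply hc0
  refine LinearMap.ext fun x => ?_
  rw [hrep]
  simp [hall]

lemma aux_traj_span {ψ : V →ₗ[𝕂] V} {g : V →ₗ[𝕂] 𝕂}
    (h : ¬ LinearIndependent 𝕂 fun k : ℕ => g ∘ₗ (ψ ^ k)) :
    ∃ N : ℕ, ∀ k : ℕ, g ∘ₗ (ψ ^ k) ∈
      Submodule.span 𝕂 {h' : V →ₗ[𝕂] 𝕂 | ∃ j, j < N ∧ h' = g ∘ₗ (ψ ^ j)} := by
  rw [linearIndependent_iff] at h
  push_neg at h
  obtain ⟨l, hl, hlne⟩ := h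
  have hsupp : l.support.Nonempty := Finsupp.support_nonempty_iff.2 hlne
  set N := l.support.max' hsupp with hNdef
  set S := Submodule.span 𝕂 {h' : V →ₗ[𝕂] 𝕂 | ∃ j, j < N ∧ h' = g ∘ₗ (ψ ^ j)} with hSdef
  refine ⟨N, ?_⟩
  have hNmem : N ∈ l.support := l.support.max'_mem hsupp
  have hlN : l N ≠ 0 := Finsupp.mem_support_iff.1 hNmem
  have hrel : l N • (g ∘ₗ ψ ^ N) + ∑ k ∈ l.support.erase N, l k • (g ∘ₗ ψ ^ k) = 0 := by
    rw [Finsupp.linearCombination_apply, Finsupp.sum] at hl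
    rw [← Finset.add_sum_erase _ _ hNmem] at hl
    exact hl
  have hN : g ∘ₗ ψ ^ N ∈ S := by
    have : g ∘ₗ ψ ^ N = (l N)⁻¹ • (- ∑ k ∈ l.support.erase N, l k • (g ∘ₗ ψ ^ k)) := by
      rw [eq_inv_smul_iff₀ hlN]
      exact eq_neg_of_add_eq_zero_left hrel
    rw [this]
    refine S.smul_mem _ (S.neg_mem (S.sum_mem fun k hk => S.smul_mem _ ?_))
    have hkN : k < N := lt_of_le_of_ne (l.support.le_max' k (Finset.mem_of_mem_erase hk))
      (Finset.ne_of_mem_erase hk)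
    exact Submodule.subset_span ⟨k, hkN, rfl⟩
  have hstep : ∀ h' ∈ S, h' ∘ₗ ψ ∈ S := by
    have hmap : Submodule.map (LinearMap.lcomp 𝕂 𝕂 ψ) S ≤ S := by
      rw [hSdef, Submodule.map_span, Submodule.span_le]
      rintro - ⟨-, ⟨j, hj, rfl⟩, rfl⟩
      have : LinearMap.lcomp 𝕂 𝕂 ψ (g ∘ₗ ψ ^ j) = g ∘ₗ ψ ^ (j + 1) := by
        rw [pow_succ, Module.End.mul_eq_comp, ← LinearMap.comp_assoc]; rfl
      rw [this]
      rcases lt_or_eq_of_le (Nat.succ_le_of_lt hj) with h1 | h1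
      · exact Submodule.subset_span ⟨j + 1, h1, rfl⟩
      · have h2 : g ∘ₗ ψ ^ (j + 1) = g ∘ₗ ψ ^ N := by rw [← h1]
        rw [h2]; exact hN
    intro h' hh'
    exact hmap (Submodule.mem_map_of_mem hh')
  intro k
  induction k with
  | zero =>
    rcases Nat.eq_zero_or_pos N with h0 | h0
    · rw [← h0]; exact hN
    · exact Submodule.subset_span ⟨0, h0, rfl⟩
  | succ k ih =>
    have : g ∘ₗ ψ ^ (k + 1) = (g ∘ₗ ψ ^ k) ∘ₗ ψ := by
      rw [pow_succ, Module.End.mul_eq_comp, LinearMap.comp_assoc]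
    rw [this]
    exact hstep _ ih

lemma aux_finite_quotient [TopologicalSpace V] [IsTopologicalAddGroup V]
    (hV : IsLinearlyCompact 𝕂 V) (U : Submodule 𝕂 V) (hU : IsOpen (U : Set V)) :
    Module.Finite 𝕂 (V ⧸ U) := by
  classical
  by_contra hfin
  set Q := V ⧸ U
  let b := Module.Basis.ofVectorSpace 𝕂 Q
  have hinf : Infinite (Module.Basis.ofVectorSpaceIndex 𝕂 Q) := by
    rw [← not_finite_iff_infinite]
    intro hfin'
    exact hfin (Module.Finite.of_basis b)
  let emb := Infinite.natEmbedding (Module.Basis.ofVectorSpaceIndex 𝕂 Q)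
  let e : ℕ → Q := fun n => b (emb n)
  have hx : ∀ n, ∃ x : V, Submodule.Quotient.mk x = e n := fun n =>
    Submodule.Quotient.mk_surjective U (e n)
  choose x hxe using hx
  let N : ℕ → Submodule 𝕂 V := fun n => U ⊔ Submodule.span 𝕂 (x '' Set.Ici n)
  have hNopen : ∀ n, IsOpen ((N n : Set V)) := fun n =>
    Submodule.isOpen_mono le_sup_left hU
  have hNclosed : ∀ n, IsClosed ((N n : Set V)) := fun n =>
    aux_submodule_isClosed _ (hNopen n)
  let s : ℕ → V := fun n => ∑ k ∈ Finset.range n, x k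
  have hdiff : ∀ {n m : ℕ}, n ≤ m → s m - s n ∈ N n := by
    intro n m hnm
    rw [show s m - s n = ∑ k ∈ Finset.Ico n m, x k from
      (Finset.sum_Ico_eq_sub _ hnm).symm]
    refine Submodule.sum_mem _ fun k hk => ?_
    exact Submodule.mem_sup_right (Submodule.subset_span
      ⟨k, (Finset.mem_Ico.1 hk).1, rfl⟩)
  obtain ⟨y, hy⟩ := hV.2.2 ℕ N s hNclosed (by
    intro F
    refine ⟨s ((F.sup id) + 1), Set.mem_iInter₂.2 fun n hn => ?_⟩
    refine ⟨s ((F.sup id) + 1) - s n, hdiff (Nat.le_succ_of_le (Finset.le_sup (f := id) hn)), ?_⟩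
    show s n + (s ((F.sup id) + 1) - s n) = s ((F.sup id) + 1)
    rw [add_comm, sub_add_cancel])
  rw [Set.mem_iInter] at hy
  have hyq : ∀ n : ℕ, ∃ z ∈ Submodule.span 𝕂 (e '' Set.Ici n),
      (Submodule.Quotient.mk y : Q) = (∑ k ∈ Finset.range n, e k) + z := by
    intro n
    obtain ⟨z, hz, hyz⟩ := hy n
    refine ⟨Submodule.Quotient.mk z - 0, ?_, ?_⟩
    · rw [sub_zero]
      have : Submodule.map U.mkQ (N n) = Submodule.span 𝕂 (e '' Set.Ici n) := by
        rw [Submodule.map_sup, Submodule.map_span]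
        have h1 : Submodule.map U.mkQ U = ⊥ := by
          rw [eq_bot_iff]
          rintro - ⟨a, ha, rfl⟩
          simpa [Submodule.mem_bot, Submodule.Quotient.mk_eq_zero] using ha
        rw [h1, bot_sup_eq]
        congr 1
        rw [← Set.image_comp]
        exact Set.image_congr fun a _ => hxe a
      rw [← this]
      exact Submodule.mem_map_of_mem hz
    · rw [sub_zero, ← hyz]
      have hmk : (Submodule.Quotient.mk (s n + z) : Q) = U.mkQ (s n) + U.mkQ z :=
        map_add U.mkQ _ _
      rw [hmk]
      congr 1
      show U.mkQ (∑ k ∈ Finset.range n, x k) = _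
      rw [map_sum]
      exact Finset.sum_congr rfl fun k _ => hxe k
  have hcoord : ∀ j : ℕ, b.repr (Submodule.Quotient.mk y) (emb j) = 1 := by
    intro j
    obtain ⟨z, hz, hyz⟩ := hyq (j + 1)
    have hz0 : b.repr z (emb j) = 0 := by
      have hker : Submodule.span 𝕂 (e '' Set.Ici (j + 1)) ≤
          LinearMap.ker ((Finsupp.lapply (emb j)).comp b.repr.toLinearMap) := by
        rw [Submodule.span_le]
        rintro - ⟨k, hk, rfl⟩
        simp only [SetLike.mem_coe, LinearMap.mem_ker, LinearMap.comp_apply,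
          LinearEquiv.coe_coe, Finsupp.lapply_apply]
        rw [show e k = b (emb k) from rfl, b.repr_self]
        rw [Finsupp.single_apply]
        have hk' : j + 1 ≤ k := hk
        rw [if_neg fun h => (by omega : k ≠ j) (emb.injective h)]
      exact hker hz
    have hsum : b.repr (∑ k ∈ Finset.range (j + 1), e k) (emb j) = 1 := by
      rw [map_sum, Finsupp.finset_sum_apply]
      rw [Finset.sum_eq_single j]
      · show b.repr (e j) (emb j) = 1
        rw [show e j = b (emb j) from rfl, b.repr_self, Finsupp.single_apply, if_pos rfl]
      · intro k _ hkj
        show b.repr (e k) (emb j) = 0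
        rw [show e k = b (emb k) from rfl, b.repr_self, Finsupp.single_apply,
          if_neg fun h => hkj (emb.injective h)]
      · intro hj; exact absurd (Finset.self_mem_range_succ j) hj
    rw [hyz, map_add, Finsupp.add_apply, hsum, hz0, add_zero]
  have hmem : ∀ j : ℕ, emb j ∈ (b.repr (Submodule.Quotient.mk y)).support := by
    intro j
    rw [Finsupp.mem_support_iff, hcoord j]
    exact one_ne_zero
  have : (Set.range (fun j => (emb j : Module.Basis.ofVectorSpaceIndex 𝕂 Q))).Infinite :=
    Set.infinite_range_of_injective emb.injective
  exact this (Set.Finite.subset (Finset.finite_toSet _) (Set.range_subset_iff.2 hmem))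

lemma aux_closed_lc [TopologicalSpace V]
    (hV : IsLinearlyCompact 𝕂 V) (W : Submodule 𝕂 V) (hW : IsClosed (W : Set V)) :
    IsLinearlyCompact 𝕂 ↥W := by
  obtain ⟨hT2, hbasis, hfip⟩ := hV
  refine ⟨?_, ?_, ?_⟩
  · letI := hT2; infer_instance
  · intro S hS
    rw [mem_nhds_subtype] at hS
    obtain ⟨T, hT, hTS⟩ := hS
    obtain ⟨U', hU'open, hU'T⟩ := hbasis T (by simpa using hT)
    refine ⟨U'.comap W.subtype, ?_, ?_⟩
    · exact hU'open.preimage continuous_subtype_val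
    · intro a ha
      exact hTS (hU'T ha)
  · intro ι N v hclosed hFIP
    by_cases hι : Nonempty ι
    · set M : ι → Submodule 𝕂 V := fun i => (N i).map W.subtype with hM
      have hMclosed : ∀ i, IsClosed ((M i : Set V)) := by
        intro i
        have : (M i : Set V) = Subtype.val '' ((N i : Set ↥W)) := by
          simp [hM, Submodule.map_coe]
        rw [this]
        exact (hW.isClosedEmbedding_subtypeVal.isClosedMap) _ (hclosed i)
      have hMFIP : ∀ F : Finset ι,
          (⋂ i ∈ F, (((v i : V) + ·) '' (M i : Set V))).Nonempty := by
        intro F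
        obtain ⟨y, hy⟩ := hFIP F
        refine ⟨(y : V), Set.mem_iInter₂.2 fun i hi => ?_⟩
        obtain ⟨z, hz, hyz⟩ := Set.mem_iInter₂.1 hy i hi
        exact ⟨(z : V), Submodule.mem_map_of_mem hz, by rw [← hyz]; rfl⟩
      obtain ⟨y, hy⟩ := hfip ι M (fun i => (v i : V)) hMclosed hMFIP
      rw [Set.mem_iInter] at hy
      obtain ⟨i₀⟩ := hι
      have hyW : y ∈ W := by
        obtain ⟨z, hz, hyz⟩ := hy i₀
        obtain ⟨z', _, rfl⟩ := hz
        rw [← hyz]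
        exact W.add_mem (v i₀).2 z'.2
      refine ⟨⟨y, hyW⟩, Set.mem_iInter.2 fun i => ?_⟩
      obtain ⟨z, hz, hyz⟩ := hy i
      obtain ⟨z', hz', rfl⟩ := hz
      exact ⟨z', hz', Subtype.ext hyz⟩
    · rw [not_nonempty_iff] at hι
      rw [Set.iInter_of_empty]
      exact ⟨0, trivial⟩

lemma aux_entStar_eq_zero {X : Type*} [AddCommGroup X] [Module 𝕂 X]
    [TopologicalSpace X] [IsTopologicalAddGroup X]
    (hX : IsLinearlyCompact 𝕂 X) (ψ : X →ₗ[𝕂] X)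
    (h : ∀ g : X →ₗ[𝕂] 𝕂, IsOpen ((LinearMap.ker g : Submodule 𝕂 X) : Set X) →
      ¬ LinearIndependent 𝕂 (fun k : ℕ => g ∘ₗ (ψ ^ k))) :
    entStar 𝕂 X ψ = 0 := by
  rw [entStar, ← le_zero_iff]
  refine iSup_le fun U => iSup_le fun hU => ?_
  haveI hfin : Module.Finite 𝕂 (X ⧸ U) := aux_finite_quotient hX U hU
  let b : Module.Basis (Fin (Module.finrank 𝕂 (X ⧸ U))) 𝕂 (X ⧸ U) := Module.finBasis 𝕂 (X ⧸ U)
  let g : Fin (Module.finrank 𝕂 (X ⧸ U)) → (X →ₗ[𝕂] 𝕂) := fun i => (b.coord i) ∘ₗ U.mkQ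
  have hUker : ∀ x : X, x ∈ U ↔ ∀ i, g i x = 0 := by
    intro x
    constructor
    · intro hx i
      show b.coord i (U.mkQ x) = 0
      rw [Submodule.mkQ_apply, (Submodule.Quotient.mk_eq_zero U).2 hx, map_zero]
    · intro hx
      have h0 : (∀ i, b.coord i (U.mkQ x) = 0) := hx
      rw [Module.Basis.forall_coord_eq_zero_iff] at h0
      exact (Submodule.Quotient.mk_eq_zero U).1 h0
  have hgopen : ∀ i, IsOpen ((LinearMap.ker (g i) : Submodule 𝕂 X) : Set X) := by
    intro i
    refine Submodule.isOpen_mono (fun x hx => ?_) hU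
    exact LinearMap.mem_ker.2 ((hUker x).1 hx i)
  have htraj := fun i => aux_traj_span (h (g i) (hgopen i))
  choose Nf hNf using htraj
  let K : Submodule 𝕂 X :=
    ⨅ p : (Σ i : Fin (Module.finrank 𝕂 (X ⧸ U)), Fin (Nf i)),
      LinearMap.ker (g p.1 ∘ₗ ψ ^ (p.2 : ℕ))
  have hKker : ∀ i (k : ℕ), ∀ x ∈ K, (g i ∘ₗ ψ ^ k) x = 0 := by
    intro i k x hx
    have hxk : ∀ j, j < Nf i → (g i ∘ₗ ψ ^ j) x = 0 := by
      intro j hj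
      exact (Submodule.mem_iInf _).1 hx ⟨i, ⟨j, hj⟩⟩
    refine Submodule.span_induction (p := fun h' _ => h' x = 0) ?_ ?_ ?_ ?_ (hNf i k)
    · rintro - ⟨j, hj, rfl⟩; exact hxk j hj
    · rfl
    · intro a c _ _ ha hc; simp [LinearMap.add_apply, ha, hc]
    · intro a c _ hc; simp [LinearMap.smul_apply, hc]
  have hKCn : ∀ n, K ≤ Cn ψ U n := by
    intro n x hx
    rw [aux_mem_Cn]
    intro k _
    rw [hUker]
    intro i
    exact hKker i k x hx
  haveI hKfin : Module.Finite 𝕂 (X ⧸ K) := by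
    let Φ := LinearMap.pi (fun p : (Σ i : Fin (Module.finrank 𝕂 (X ⧸ U)), Fin (Nf i)) =>
      g p.1 ∘ₗ ψ ^ (p.2 : ℕ))
    have hK : K = LinearMap.ker Φ := by
      ext x
      rw [Submodule.mem_iInf, LinearMap.mem_ker]
      constructor
      · intro hx; funext p; exact hx p
      · intro hx p; exact congrFun hx p
    rw [hK]
    exact Module.Finite.equiv (LinearMap.quotKerEquivRange Φ).symm
  set d := Module.finrank 𝕂 (X ⧸ K) with hd
  have hrank : ∀ n : ℕ,
      Module.rank 𝕂 (↥U ⧸ Submodule.comap U.subtype (Cn ψ U n)) ≤ (d : Cardinal) := by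
    intro n
    have h1 : Module.rank 𝕂 (↥U ⧸ Submodule.comap U.subtype (Cn ψ U n)) ≤
        Module.rank 𝕂 (X ⧸ Cn ψ U n) := by
      refine LinearMap.rank_le_of_injective (Submodule.mapQ _ _ U.subtype
        (fun x hx => hx)) ?_
      intro a c
      obtain ⟨a', rfl⟩ := Submodule.Quotient.mk_surjective _ a
      obtain ⟨c', rfl⟩ := Submodule.Quotient.mk_surjective _ c
      intro hac
      rw [Submodule.mapQ_apply, Submodule.mapQ_apply, Submodule.Quotient.eq] at hac
      rw [Submodule.Quotient.eq]
      exact hac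
    have h2 : Module.rank 𝕂 (X ⧸ Cn ψ U n) ≤ Module.rank 𝕂 (X ⧸ K) := by
      refine LinearMap.rank_le_of_surjective
        (Submodule.mapQ K (Cn ψ U n) LinearMap.id (hKCn n)) ?_
      intro a
      obtain ⟨a', rfl⟩ := Submodule.Quotient.mk_surjective _ a
      exact ⟨Submodule.Quotient.mk a', by rw [Submodule.mapQ_apply]; rfl⟩
    have h3 : Module.rank 𝕂 (X ⧸ K) = (d : Cardinal) := (Module.finrank_eq_rank 𝕂 _).symm
    exact (h1.trans h2).trans h3.le
  have hbound : ∀ n : ℕ,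
      (((Module.rank 𝕂 (↥U ⧸ Submodule.comap U.subtype (Cn ψ U n))).toENat : ℕ∞) : ℝ≥0∞) /
        (n : ℝ≥0∞) ≤ (d : ℝ≥0∞) * ((n : ℝ≥0∞))⁻¹ := by
    intro n
    rw [div_eq_mul_inv]
    refine mul_le_mul_left ?_ _
    have := Cardinal.toENat_le_nat.2 (hrank n)
    calc (((Module.rank 𝕂 (↥U ⧸ Submodule.comap U.subtype (Cn ψ U n))).toENat : ℕ∞) : ℝ≥0∞)
        ≤ (((d : ℕ∞) : ℝ≥0∞)) := ENat.toENNReal_le.2 this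
      _ = (d : ℝ≥0∞) := ENat.toENNReal_coe d
  have htend : Tendsto (fun n : ℕ => (d : ℝ≥0∞) * ((n : ℝ≥0∞))⁻¹) atTop (nhds 0) := by
    have := ENNReal.Tendsto.const_mul (a := (d : ℝ≥0∞))
      ENNReal.tendsto_inv_nat_nhds_zero (Or.inr (ENNReal.natCast_ne_top d))
    simpa using this
  calc HStar ψ U ≤ atTop.limsup (fun n : ℕ => (d : ℝ≥0∞) * ((n : ℝ≥0∞))⁻¹) :=
        Filter.limsup_le_limsup (Eventually.of_forall hbound)
    _ = 0 := htend.limsup_eq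

end AuxLemmas

/-- Let `(V,φ)` be a topological flow and `W` a closed `φ`-invariant
`𝕂`-subspace of `V` with `ent*(W, φ|_W) > 0`.  Then there exists a non-stationary cocyclic
`φ`-cotrajectory `C(φ,U)` with `C(φ,U) + W = V`. -/
theorem stmt_7 {𝕂 V : Type*} [Field 𝕂] [TopologicalSpace 𝕂] [DiscreteTopology 𝕂]
    [AddCommGroup V] [Module 𝕂 V] [TopologicalSpace V] [IsTopologicalAddGroup V]
    [ContinuousSMul 𝕂 V]
    (hV : IsLinearlyCompact 𝕂 V) (φ : V →ₗ[𝕂] V) (hφ : Continuous φ)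
    (W : Submodule 𝕂 V) (hWclosed : IsClosed (W : Set V))
    (hWinv : ∀ x ∈ W, φ x ∈ W)
    (hent : 0 < entStar 𝕂 ↥W (φ.restrict hWinv)) :
    ∃ U : Submodule 𝕂 V, IsOpen (U : Set V) ∧ Module.finrank 𝕂 (V ⧸ U) = 1 ∧
      ¬ IsOpen ((Cotraj φ U : Set V)) ∧ Cotraj φ U ⊔ W = ⊤ := by
  classical
  set ψ := φ.restrict hWinv with hψ
  have hWlc : IsLinearlyCompact 𝕂 ↥W := aux_closed_lc hV W hWclosed
  have hpow : ∀ (k : ℕ) (x : ↥W), ((ψ ^ k) x : V) = (φ ^ k) (x : V) := by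
    intro k x
    rw [hψ, Module.End.pow_restrict]
    exact LinearMap.restrict_coe_apply _ _ _
  -- find a continuous functional on W with independent trajectory
  obtain ⟨g, hgopen, hgli⟩ : ∃ g : ↥W →ₗ[𝕂] 𝕂,
      IsOpen ((LinearMap.ker g : Submodule 𝕂 ↥W) : Set ↥W) ∧
      LinearIndependent 𝕂 (fun k : ℕ => g ∘ₗ (ψ ^ k)) := by
    by_contra hng
    push_neg at hng
    have h0 := aux_entStar_eq_zero hWlc ψ (fun g hgo => hng g hgo)
    rw [h0] at hent
    exact lt_irrefl 0 hent
  -- extend g to a continuous functional f on V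
  obtain ⟨O, hOopen, hOker⟩ : ∃ O : Set V, IsOpen O ∧
      Subtype.val ⁻¹' O = ((LinearMap.ker g : Submodule 𝕂 ↥W) : Set ↥W) := by
    rw [isOpen_induced_iff] at hgopen
    exact hgopen
  have hO0 : (0 : V) ∈ O := by
    have h0 : (0 : ↥W) ∈ Subtype.val ⁻¹' O := by
      rw [hOker]; exact (LinearMap.ker g).zero_mem
    simpa using h0
  obtain ⟨U₁, hU₁open, hU₁O⟩ := hV.2.1 O (hOopen.mem_nhds hO0)
  have hU₁g : ∀ (x : V) (hx : x ∈ W), x ∈ U₁ → g ⟨x, hx⟩ = 0 := by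
    intro x hx hxU
    have h1 : (⟨x, hx⟩ : ↥W) ∈ Subtype.val ⁻¹' O := hU₁O hxU
    rw [hOker] at h1
    exact h1
  -- a complement E of W ⊓ U₁ inside U₁
  obtain ⟨E', hE'⟩ := Submodule.exists_isCompl ((W ⊓ U₁).comap U₁.subtype)
  set E : Submodule 𝕂 V := E'.map U₁.subtype with hEdef
  have hEU₁ : E ≤ U₁ := by
    rintro x ⟨y, -, rfl⟩
    exact y.2
  have hWE : ∀ x ∈ W, x ∈ E → x = 0 := by
    rintro x hxW ⟨y, hy, rfl⟩
    have : y ∈ (W ⊓ U₁).comap U₁.subtype := by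
      exact Submodule.mem_comap.2 (Submodule.mem_inf.2 ⟨hxW, y.2⟩)
    have h0 : y ∈ (W ⊓ U₁).comap U₁.subtype ⊓ E' := Submodule.mem_inf.2 ⟨this, hy⟩
    rw [hE'.inf_eq_bot] at h0
    rw [Submodule.mem_bot] at h0
    rw [h0]
    rfl
  have hU₁split : ∀ u ∈ U₁, ∃ a, (a ∈ W ∧ a ∈ U₁) ∧ ∃ e ∈ E, u = a + e := by
    intro u hu
    have h1 : (⟨u, hu⟩ : ↥U₁) ∈ (W ⊓ U₁).comap U₁.subtype ⊔ E' := by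
      rw [hE'.sup_eq_top]; trivial
    obtain ⟨a', ha', e', he', hae⟩ := Submodule.mem_sup.1 h1
    have ha'' := Submodule.mem_comap.1 ha'
    refine ⟨(a' : V), ⟨(Submodule.mem_inf.1 ha'').1, a'.2⟩, (e' : V),
      Submodule.mem_map_of_mem he', ?_⟩
    have := congrArg (Subtype.val) hae
    simpa using this.symm
  -- extend E to a complement E₂ of W
  obtain ⟨F', hF'⟩ := Submodule.exists_isCompl (W ⊔ E)
  have hcompl : IsCompl W (E ⊔ F') := by
    constructor
    · rw [disjoint_iff]
      rw [eq_bot_iff]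
      intro x hx
      obtain ⟨hxW, hxEF⟩ := Submodule.mem_inf.1 hx
      obtain ⟨e, he, f', hf'mem, rfl⟩ := Submodule.mem_sup.1 hxEF
      have hf'WE : f' ∈ W ⊔ E := by
        have : f' = (e + f') - e := by abel
        rw [this]
        exact Submodule.sub_mem _ (Submodule.mem_sup_left hxW) (Submodule.mem_sup_right he)
      have hf0 : f' = 0 := by
        have h0 : f' ∈ (W ⊔ E) ⊓ F' := Submodule.mem_inf.2 ⟨hf'WE, hf'mem⟩
        rw [hF'.inf_eq_bot] at h0
        exact (Submodule.mem_bot 𝕂).1 h0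
      rw [hf0, add_zero] at hxW ⊢
      rw [Submodule.mem_bot]
      exact hWE e hxW he
    · rw [codisjoint_iff]
      rw [← sup_assoc]
      exact hF'.sup_eq_top
  set pr := Submodule.linearProjOfIsCompl W (E ⊔ F') hcompl with hpr
  set f : V →ₗ[𝕂] 𝕂 := g ∘ₗ pr with hf
  have hfW : ∀ (x : V) (hx : x ∈ W), f x = g ⟨x, hx⟩ := by
    intro x hx
    show g (pr x) = g ⟨x, hx⟩
    congr 1
    exact Submodule.linearProjOfIsCompl_apply_left hcompl ⟨x, hx⟩
  have hfU₁ : ∀ u ∈ U₁, f u = 0 := by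
    intro u hu
    obtain ⟨a, ⟨haW, haU⟩, e, he, rfl⟩ := hU₁split u hu
    have h1 : f (a + e) = f a + f e := map_add f a e
    have h2 : f e = 0 := by
      show g (pr e) = 0
      rw [show pr e = 0 from Submodule.linearProjOfIsCompl_apply_right' hcompl (Submodule.mem_sup_left he)]
      exact map_zero g
    rw [h1, h2, add_zero, hfW a haW]
    exact hU₁g a haW haU
  refine ⟨LinearMap.ker f, ?_, ?_, ?_, ?_⟩
  · exact Submodule.isOpen_mono (fun u hu => LinearMap.mem_ker.2 (hfU₁ u hu)) hU₁open
  · -- cocyclic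
    have hgne : g ≠ 0 := by
      have hne := hgli.ne_zero 0
      intro h0
      apply hne
      rw [h0]
      ext x
      simp
    obtain ⟨x₀, hx₀⟩ : ∃ x₀ : ↥W, g x₀ ≠ 0 := by
      by_contra hc
      push_neg at hc
      exact hgne (LinearMap.ext fun x => by rw [hc x]; rfl)
    have hfsurj : Function.Surjective f := by
      intro c
      refine ⟨(c * (g x₀)⁻¹) • (x₀ : V), ?_⟩
      rw [map_smul, hfW _ x₀.2, smul_eq_mul]
      rw [show (⟨(x₀ : V), x₀.2⟩ : ↥W) = x₀ from rfl]
      rw [mul_assoc, inv_mul_cancel₀ hx₀, mul_one]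
    have e2 : (V ⧸ LinearMap.ker f) ≃ₗ[𝕂] 𝕂 :=
      (LinearMap.quotKerEquivRange f).trans
        (LinearEquiv.ofTop _ (LinearMap.range_eq_top.2 hfsurj))
    rw [e2.finrank_eq]
    exact Module.finrank_self 𝕂
  · -- non-stationary
    intro hop
    have hfφW : ∀ (k : ℕ) (x : ↥W), f ((φ ^ k) (x : V)) = (g ∘ₗ ψ ^ k) x := by
      intro k x
      rw [← hpow k x]
      exact hfW _ ((ψ ^ k) x).2
    have hCW : ∀ x : ↥W, ((x : V) ∈ Cotraj φ (LinearMap.ker f)) ↔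
        ∀ k : ℕ, (g ∘ₗ ψ ^ k) x = 0 := by
      intro x
      rw [Cotraj, Submodule.mem_iInf]
      constructor
      · intro hx k
        rw [← hfφW k x]
        exact LinearMap.mem_ker.1 (hx k)
      · intro hx k
        rw [Submodule.mem_comap, LinearMap.mem_ker, hfφW k x]
        exact hx k
    have hopw : IsOpen (((Cotraj φ (LinearMap.ker f)).comap W.subtype : Submodule 𝕂 ↥W) :
        Set ↥W) := hop.preimage continuous_subtype_val
    haveI hqfin := aux_finite_quotient hWlc _ hopw
    set C' := (Cotraj φ (LinearMap.ker f)).comap W.subtype with hC'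
    have hvan : ∀ k : ℕ, C' ≤ LinearMap.ker (g ∘ₗ ψ ^ k) := by
      intro k x hx
      exact LinearMap.mem_ker.2 ((hCW x).1 hx k)
    have hli : LinearIndependent 𝕂
        (fun k : ℕ => Submodule.liftQ C' (g ∘ₗ ψ ^ k) (hvan k)) := by
      refine LinearIndependent.of_comp (LinearMap.lcomp 𝕂 𝕂 C'.mkQ) ?_
      have heq : (⇑(LinearMap.lcomp 𝕂 𝕂 C'.mkQ) ∘
          fun k : ℕ => Submodule.liftQ C' (g ∘ₗ ψ ^ k) (hvan k)) =
          fun k : ℕ => g ∘ₗ ψ ^ k := by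
        funext k
        show (Submodule.liftQ C' (g ∘ₗ ψ ^ k) (hvan k)).comp C'.mkQ = g ∘ₗ ψ ^ k
        exact Submodule.liftQ_mkQ _ _ _
      rw [heq]
      exact hgli
    haveI hfinℕ : Finite ℕ := hli.finite
    exact not_finite ℕ
  · -- Cotraj + W = ⊤
    have hfφW : ∀ (k : ℕ) (x : ↥W), f ((φ ^ k) (x : V)) = (g ∘ₗ ψ ^ k) x := by
      intro k x
      rw [← hpow k x]
      exact hfW _ ((ψ ^ k) x).2
    have hφk : ∀ k : ℕ, Continuous (φ ^ k : V →ₗ[𝕂] V) := by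
      intro k
      induction k with
      | zero =>
        have : ⇑((φ : V →ₗ[𝕂] V) ^ 0) = id := by
          funext x; rw [pow_zero]; rfl
        rw [this]; exact continuous_id
      | succ k ih =>
        have : ⇑(φ ^ (k + 1)) = (⇑(φ ^ k)) ∘ ⇑φ := by
          funext x; rw [pow_succ, Module.End.mul_apply]; rfl
        rw [this]; exact ih.comp hφ
    have hUopen : IsOpen ((LinearMap.ker f : Submodule 𝕂 V) : Set V) :=
      Submodule.isOpen_mono (fun u hu => LinearMap.mem_ker.2 (hfU₁ u hu)) hU₁open
    have hUclosed : IsClosed ((LinearMap.ker f : Submodule 𝕂 V) : Set V) :=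
      aux_submodule_isClosed _ hUopen
    have hCnclosed : ∀ n : ℕ, IsClosed ((Cn φ (LinearMap.ker f) n : Set V)) := by
      intro n
      have hset : (Cn φ (LinearMap.ker f) n : Set V) =
          ⋂ k ∈ Finset.range n, (φ ^ k) ⁻¹' (LinearMap.ker f : Set V) := by
        ext x
        rw [SetLike.mem_coe, aux_mem_Cn]
        simp [Finset.mem_range]
      rw [hset]
      exact isClosed_biInter fun k _ => hUclosed.preimage (hφk k)
    have hmono : ∀ {a b : ℕ}, a ≤ b →
        Cn φ (LinearMap.ker f) b ≤ Cn φ (LinearMap.ker f) a := by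
      intro a b hab x hx
      rw [aux_mem_Cn] at hx ⊢
      exact fun k hk => hx k (lt_of_lt_of_le hk hab)
    rw [eq_top_iff]
    intro v _
    have hxs : ∀ n : ℕ, ∃ x : V, x ∈ Cn φ (LinearMap.ker f) n ∧ v - x ∈ W := by
      intro n
      have hsur := aux_pi_surjective (fun k : Fin n => g ∘ₗ ψ ^ (k : ℕ))
        (hgli.comp Fin.val Fin.val_injective)
      obtain ⟨w, hw⟩ := hsur (fun k : Fin n => f ((φ ^ (k : ℕ)) v))
      refine ⟨v - (w : V), ?_, ?_⟩
      · rw [aux_mem_Cn]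
        intro k hk
        rw [LinearMap.mem_ker, map_sub, map_sub]
        have h1 : f ((φ ^ k) (w : V)) = f ((φ ^ k) v) := by
          rw [hfφW k w]
          have h2 := congrFun hw ⟨k, hk⟩
          simpa [LinearMap.pi_apply] using h2
        rw [h1, sub_self]
      · have : v - (v - (w : V)) = (w : V) := by abel
        rw [this]
        exact w.2
    choose xs hxsC hxsW using hxs
    obtain ⟨y, hy⟩ := hV.2.2 ℕ (fun n => W ⊓ Cn φ (LinearMap.ker f) n) xs
      (fun n => by
        rw [Submodule.coe_inf]
        exact hWclosed.inter (hCnclosed n))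
      (by
        intro F
        refine ⟨xs (F.sup id), Set.mem_iInter₂.2 fun n hn => ?_⟩
        refine ⟨xs (F.sup id) - xs n, ?_, ?_⟩
        · refine Submodule.mem_inf.2 ⟨?_, ?_⟩
          · have h1 : xs (F.sup id) - xs n = (v - xs n) - (v - xs (F.sup id)) := by abel
            rw [h1]
            exact W.sub_mem (hxsW n) (hxsW (F.sup id))
          · exact Submodule.sub_mem _ (hmono (Finset.le_sup (f := id) hn) (hxsC (F.sup id)))
              (hxsC n)
        · show xs n + (xs (F.sup id) - xs n) = xs (F.sup id)
          rw [add_comm, sub_add_cancel])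
    rw [Set.mem_iInter] at hy
    have hyC : y ∈ Cotraj φ (LinearMap.ker f) := by
      rw [Cotraj, Submodule.mem_iInf]
      intro k
      obtain ⟨z, hz, hyz⟩ := hy (k + 1)
      have hyCn : y ∈ Cn φ (LinearMap.ker f) (k + 1) := by
        rw [show y = xs (k + 1) + z from hyz.symm]
        exact Submodule.add_mem _ (hxsC (k + 1)) (Submodule.mem_inf.1 hz).2
      exact Submodule.mem_comap.2 ((aux_mem_Cn.1 hyCn) k (Nat.lt_succ_self k))
    have hvy : v - y ∈ W := by
      obtain ⟨z, hz, hyz⟩ := hy 0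
      rw [show y = xs 0 + z from hyz.symm]
      have h1 : v - (xs 0 + z) = (v - xs 0) - z := by abel
      rw [h1]
      exact W.sub_mem (hxsW 0) (Submodule.mem_inf.1 hz).1
    have hvyy : v = y + (v - y) := by abel
    rw [hvyy]
    exact Submodule.add_mem_sup hyC hvy
end
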